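/- arXiv:2407.03912 — 3 statements merged into one kernel-verified Lean document; each statement's English description precedes it below -/
import Mathlib

section
/- Let S be a finite point set in general position with convex layers L_0, L_1, …, and let P be a plane spanning path on S that is layer-monotone, i.e., for every i all points of L_i are visited before any point of L_{i+1}. Then P is suffix-independent: for every point u of S, the convex hull of the suffix of P starting at u contains no point of the prefix of P ending at u (other than u itself). -/
open scoped Classical

abbrev Pt := ℝ × ℝ

/-- No three distinct points of `S` are collinear. -/
def GenPos (S : Finset Pt) : Prop :=
  ∀ p ∈ S, ∀ q ∈ S, ∀ r ∈ S, p ≠ q → q ≠ r → p ≠ r →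
    ¬ Collinear ℝ ({p, q, r} : Set Pt)

/-- The (directed) edges of a path given as a list of points. -/
def edgesOf (l : List Pt) : List (Pt × Pt) := l.zip l.tail

/-- `l` is a plane (non-crossing) spanning path of the point set `S`. -/
def PlanePath (S : Finset Pt) (l : List Pt) : Prop :=
  l.Nodup ∧ l.toFinset = S ∧
  ∀ e ∈ edgesOf l, ∀ f ∈ edgesOf l, e ≠ f →
    segment ℝ e.1 e.2 ∩ segment ℝ f.1 f.2 ⊆ ({e.1, e.2} ∩ {f.1, f.2} : Set Pt)

/-- The set of undirected edges of a path. -/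
def edgeSet (l : List Pt) : Set (Sym2 Pt) :=
  {e | ∃ p ∈ edgesOf l, e = Sym2.mk p.1 p.2}

/-- A flip: remove one edge, add one new edge. -/
def Flip (l l' : List Pt) : Prop :=
  ∃ e f : Sym2 Pt, e ∈ edgeSet l ∧ f ∉ edgeSet l ∧
    edgeSet l' = insert f (edgeSet l \ {e})

/-- A plane spanning path of `S` starting at `s`. -/
def PathIn (S : Finset Pt) (s : Pt) (l : List Pt) : Prop :=
  PlanePath S l ∧ l.head? = some s

/-- `p` is an outer point of `S` (on the boundary of the convex hull). -/
def outerPt (S : Finset Pt) (p : Pt) : Prop :=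
  p ∈ S ∧ p ∈ frontier (convexHull ℝ (S : Set Pt))

/-- Points remaining after peeling `n` convex layers. -/
noncomputable def peelRes (S : Finset Pt) : ℕ → Finset Pt
  | 0 => S
  | n + 1 => (peelRes S n).filter (fun p => ¬ outerPt (peelRes S n) p)

/-- The `i`-th convex layer. -/
noncomputable def layer (S : Finset Pt) (i : ℕ) : Finset Pt :=
  (peelRes S i).filter (fun p => outerPt (peelRes S i) p)

/-- The index of the convex layer containing `p`. -/
noncomputable def layerIdx (S : Finset Pt) (p : Pt) : ℕ := sInf {i | p ∈ layer S i}

/-- A directed path is suffix-independent if no point of a proper prefix lies in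
the convex hull of the corresponding suffix. -/
def SuffixIndep (l : List Pt) : Prop :=
  ∀ i < l.length, ∀ p ∈ l.take i,
    p ∉ convexHull ℝ (((l.drop i).toFinset : Finset Pt) : Set Pt)

/-- `u` and `v` are adjacent on the convex hull boundary of `S` (a level edge of `L₀`). -/
def LevelEdge (S : Finset Pt) (u v : Pt) : Prop :=
  u ∈ layer S 0 ∧ v ∈ layer S 0 ∧ u ≠ v ∧
    segment ℝ u v ⊆ frontier (convexHull ℝ (S : Set Pt))

/-- A path is chord-free if every edge between two hull points is a level edge. -/
def ChordFree (S : Finset Pt) (l : List Pt) : Prop :=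
  ∀ e ∈ edgesOf l, e.1 ∈ layer S 0 → e.2 ∈ layer S 0 → LevelEdge S e.1 e.2

/-- The number of `L₀`-level edges of the path `l`. -/
noncomputable def levelCount (S : Finset Pt) (l : List Pt) : ℕ :=
  Nat.card {e : Pt × Pt | e ∈ edgesOf l ∧ LevelEdge S e.1 e.2}

/-- The number of convex-hull edges of the path `l`. -/
noncomputable def hullEdgeCount (S : Finset Pt) (l : List Pt) : ℕ :=
  Nat.card {e : Pt × Pt | e ∈ edgesOf l ∧
    segment ℝ e.1 e.2 ⊆ frontier (convexHull ℝ (S : Set Pt))}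

/-- `a` sees `b` with respect to the path `l`: the segment `ab` meets edges of `l`
only in common endpoints. -/
def Sees (l : List Pt) (a b : Pt) : Prop :=
  ∀ e ∈ edgesOf l,
    segment ℝ a b ∩ segment ℝ e.1 e.2 ⊆ ({a, b} ∩ {e.1, e.2} : Set Pt)

/-- `S` is in convex position. -/
def ConvexPos (S : Finset Pt) : Prop :=
  ∀ p ∈ S, p ∉ convexHull ℝ ((S.erase p : Finset Pt) : Set Pt)

/-- A spiral from `s`: a plane spanning path starting at `s` all of whose edges lie
on the boundary of the convex hull. -/
def IsSpiral (S : Finset Pt) (s : Pt) (l : List Pt) : Prop :=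
  PathIn S s l ∧ ∀ e ∈ edgesOf l,
    segment ℝ e.1 e.2 ⊆ frontier (convexHull ℝ (S : Set Pt))

/-- Chains of flips of length `n` within the plane spanning paths of `S` starting at `s`. -/
inductive FlipChain (S : Finset Pt) (s : Pt) : List Pt → List Pt → ℕ → Prop
  | refl (l : List Pt) (h : PathIn S s l) : FlipChain S s l l 0
  | step {l m r : List Pt} {n : ℕ} (h : FlipChain S s l m n) (hr : PathIn S s r)
      (hf : Flip m r) : FlipChain S s l r (n + 1)

/-- The signed area / orientation determinant of three points. -/
def odet (a b c : Pt) : ℝ :=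
  (b.1 - a.1) * (c.2 - a.2) - (b.2 - a.2) * (c.1 - a.1)

lemma stmt1Aux_exists_outer {T : Finset Pt} (hT : T.Nonempty) : ∃ p ∈ T, outerPt T p := by
  obtain ⟨p, hp, hmin⟩ := T.exists_min_image (fun q => q.1) hT
  refine ⟨p, hp, hp, ?_, ?_⟩
  · exact subset_closure (subset_convexHull ℝ _ hp)
  · intro hint
    rw [mem_interior_iff_mem_nhds, Metric.mem_nhds_iff] at hint
    obtain ⟨ε, hε, hball⟩ := hint
    have hq : ((p.1 - ε/2, p.2) : Pt) ∈ Metric.ball p ε := by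
      have h1 : dist (p.1 - ε/2) p.1 = ε/2 := by
        rw [Real.dist_eq, show p.1 - ε/2 - p.1 = -(ε/2) by ring, abs_neg,
          abs_of_nonneg (by linarith)]
      simp only [Metric.mem_ball, Prod.dist_eq, h1, dist_self]
      rw [max_eq_left (by linarith)]
      linarith
    have hhalf : convexHull ℝ (T : Set Pt) ⊆ {w : Pt | p.1 ≤ w.1} := by
      apply convexHull_min
      · exact fun q hq => hmin q hq
      · exact convex_halfSpace_ge ⟨fun x y => rfl, fun c x => rfl⟩ p.1
    have := hhalf (hball hq)
    simp only [Set.mem_setOf_eq] at this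
    linarith

lemma stmt1Aux_peelRes_subset (S : Finset Pt) : ∀ n, peelRes S n ⊆ S
  | 0 => Finset.Subset.refl S
  | n + 1 => (Finset.filter_subset _ _).trans (stmt1Aux_peelRes_subset S n)

lemma stmt1Aux_exists_layer_aux (S : Finset Pt) :
    ∀ k n, (peelRes S n).card ≤ k → ∀ p ∈ peelRes S n, ∃ i, p ∈ layer S i := by
  intro k
  induction k with
  | zero =>
    intro n h p hp
    rw [Nat.le_zero, Finset.card_eq_zero] at h
    simp [h] at hp
  | succ k ih =>
    intro n h p hp
    by_cases ho : outerPt (peelRes S n) p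
    · exact ⟨n, Finset.mem_filter.2 ⟨hp, ho⟩⟩
    · refine ih (n + 1) ?_ p (by simp [peelRes, Finset.mem_filter, hp, ho])
      obtain ⟨q, hq, hqo⟩ := stmt1Aux_exists_outer ⟨p, hp⟩
      have hss : peelRes S (n + 1) ⊂ peelRes S n := by
        refine Finset.ssubset_iff_of_subset (Finset.filter_subset _ _) |>.2 ⟨q, hq, ?_⟩
        simp [peelRes, Finset.mem_filter, hqo]
      have := Finset.card_lt_card hss
      omega

lemma stmt1Aux_exists_layer {S : Finset Pt} {p : Pt} (hp : p ∈ S) : ∃ i, p ∈ layer S i :=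
  stmt1Aux_exists_layer_aux S S.card 0 le_rfl p hp

lemma stmt1Aux_mem_layer_layerIdx {S : Finset Pt} {p : Pt} (hp : p ∈ S) :
    p ∈ layer S (layerIdx S p) :=
  Nat.sInf_mem (stmt1Aux_exists_layer hp)

lemma stmt1Aux_mem_peelRes_of_forall {S : Finset Pt} {q : Pt} (hq : q ∈ S) :
    ∀ k, (∀ j < k, q ∉ layer S j) → q ∈ peelRes S k := by
  intro k
  induction k with
  | zero => exact fun _ => hq
  | succ k ih =>
    intro h
    have hqk : q ∈ peelRes S k := ih fun j hj => h j (hj.trans (Nat.lt_succ_self k))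
    have : ¬ outerPt (peelRes S k) q := fun ho =>
      h k (Nat.lt_succ_self k) (Finset.mem_filter.2 ⟨hqk, ho⟩)
    simp [peelRes, Finset.mem_filter, hqk, this]

lemma stmt1Aux_finrank_Pt : Module.finrank ℝ Pt = 2 := by
  rw [Module.finrank_prod, Module.finrank_self]

lemma stmt1Aux_key {S T : Finset Pt} (hS : GenPos S) (hTS : T ⊆ S) {p : Pt}
    (hpT : p ∈ T) (hpf : p ∈ frontier (convexHull ℝ (T : Set Pt))) :
    p ∉ convexHull ℝ ((T : Set Pt) \ {p}) := by
  intro hmem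
  obtain ⟨ι, hfin, z, w, hrange, hindep, hwpos, hwsum, hcomb⟩ :=
    eq_pos_convex_span_of_mem_convexHull hmem
  have hzT : ∀ i, z i ∈ T := fun i => (hrange ⟨i, rfl⟩).1
  have hzp : ∀ i, z i ≠ p := fun i => (hrange ⟨i, rfl⟩).2
  have hcard3 : Fintype.card ι ≤ 3 := by
    have h1 := hindep.card_le_finrank_succ (k := ℝ)
    exact h1.trans (Nat.add_le_add_right (stmt1Aux_finrank_Pt ▸ Submodule.finrank_le _) 1)
  rcases e : Fintype.card ι with _ | _ | _ | n
  · -- card 0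
    have : IsEmpty ι := Fintype.card_eq_zero_iff.mp e
    simp at hwsum
  · -- card 1
    obtain ⟨i0, hall⟩ := Fintype.card_eq_one_iff.mp e
    have huniv : (Finset.univ : Finset ι) = {i0} := by
      ext b; simp [hall b]
    rw [huniv, Finset.sum_singleton] at hwsum hcomb
    rw [hwsum, one_smul] at hcomb
    exact hzp i0 hcomb
  · -- card 2
    obtain ⟨a, b, hab, hset⟩ := (Nat.card_eq_two_iff (α := ι)).mp (by rw [Nat.card_eq_fintype_card, e])
    have huniv : (Finset.univ : Finset ι) = {a, b} := by
      apply Finset.coe_injective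
      rw [Finset.coe_univ, Finset.coe_insert, Finset.coe_singleton, hset]
    rw [huniv, Finset.sum_pair hab] at hwsum hcomb
    have hseg : p ∈ segment ℝ (z a) (z b) :=
      ⟨w a, w b, (hwpos a).le, (hwpos b).le, hwsum, hcomb⟩
    have hline : p ∈ line[ℝ, z a, z b] := by
      rw [← convexHull_pair] at hseg
      exact convexHull_subset_affineSpan _ hseg
    have hcol : Collinear ℝ ({p, z a, z b} : Set Pt) :=
      collinear_insert_of_mem_affineSpan_pair hline
    exact hS p (hTS hpT) (z a) (hTS (hzT a)) (z b) (hTS (hzT b))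
      (hzp a).symm (hindep.injective.ne hab) (hzp b).symm hcol
  · -- card 3 (n+3); from hcard3, n = 0
    have e3 : Fintype.card ι = 3 := by omega
    have htop : affineSpan ℝ (Set.range z) = ⊤ := by
      rw [hindep.affineSpan_eq_top_iff_card_eq_finrank_add_one, e3, stmt1Aux_finrank_Pt]
    let B : AffineBasis ι ℝ Pt := ⟨z, hindep, htop⟩
    have hrB : Set.range (B : ι → Pt) = Set.range z := rfl
    have hpi : p ∈ interior (convexHull ℝ (Set.range z)) := by
      rw [← hrB, B.interior_convexHull]
      intro i
      have hco : Finset.univ.affineCombination ℝ z w = p := by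
        rw [Finset.univ.affineCombination_eq_linear_combination z w hwsum, hcomb]
      have h2 : B.coord i (Finset.univ.affineCombination ℝ z w) = w i :=
        B.coord_apply_combination_of_mem (Finset.mem_univ i) hwsum
      rw [← hco, h2]
      exact hwpos i
    have : p ∈ interior (convexHull ℝ (T : Set Pt)) :=
      interior_mono (convexHull_mono (hrange.trans Set.diff_subset)) hpi
    exact hpf.2 this

/-- A layer-monotone plane spanning path is suffix-independent. -/
theorem stmt1 (S : Finset Pt) (hS : GenPos S) (l : List Pt) (hl : PlanePath S l)
    (hmono : ∀ (i j : ℕ) (hij : i < j) (hj : j < l.length),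
      layerIdx S (l.get ⟨i, lt_trans hij hj⟩) ≤ layerIdx S (l.get ⟨j, hj⟩)) :
    SuffixIndep l := by
  intro i hi p hp hmem
  obtain ⟨hnd, hset, -⟩ := hl
  obtain ⟨jp, hjp, hjpe⟩ := List.mem_iff_getElem.mp hp
  have hjpi : jp < i := lt_of_lt_of_le hjp (by simp [List.length_take])
  have hjpl : jp < l.length := lt_of_lt_of_le hjp (by simp [List.length_take])
  have hpe : l[jp] = p := by rw [← hjpe, List.getElem_take]
  have hpS : p ∈ S := by
    rw [← hset]
    exact List.mem_toFinset.mpr (List.take_subset i l hp)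
  set k := layerIdx S p with hkdef
  have hk : p ∈ layer S k := stmt1Aux_mem_layer_layerIdx hpS
  have hpk : p ∈ peelRes S k := (Finset.mem_filter.mp hk).1
  have hpfr : p ∈ frontier (convexHull ℝ ((peelRes S k : Finset Pt) : Set Pt)) :=
    (Finset.mem_filter.mp hk).2.2
  have hpnd : p ∉ l.drop i := by
    intro hpd
    rw [← List.take_append_drop i l, List.nodup_append] at hnd
    exact hnd.2.2 p hp p hpd rfl
  have hsub : ((l.drop i).toFinset : Set Pt) ⊆ (peelRes S k : Set Pt) \ {p} := by
    intro q hq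
    have hq' : q ∈ l.drop i := List.mem_toFinset.mp hq
    obtain ⟨jq, hjq, hjqe⟩ := List.mem_iff_getElem.mp hq'
    have hlen : i + jq < l.length := by
      rw [List.length_drop] at hjq; omega
    have hqe : l[i + jq] = q := by rw [← hjqe, List.getElem_drop]
    have hmono' := hmono jp (i + jq) (by omega) hlen
    rw [List.get_eq_getElem, List.get_eq_getElem, hpe, hqe] at hmono'
    have hqS : q ∈ S := by
      rw [← hset]
      exact List.mem_toFinset.mpr (List.drop_subset i l hq')
    refine ⟨stmt1Aux_mem_peelRes_of_forall hqS k ?_, ?_⟩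
    · intro j hj hql
      have := Nat.sInf_le (show j ∈ {m | q ∈ layer S m} from hql)
      have : layerIdx S q ≤ j := this
      omega
    · intro hqp
      rw [Set.mem_singleton_iff] at hqp
      exact hpnd (hqp ▸ hq')
  exact stmt1Aux_key hS (stmt1Aux_peelRes_subset S k) hpk hpfr (convexHull_mono hsub hmem)
end

section
/- Let S be a finite point set in general position and let P be a plane spanning path on S whose two endpoints are adjacent points on the boundary of conv(S) (i.e., they are consecutive vertices of the convex hull). Then P contains no chord, i.e., no edge between two non-adjacent points of L_0. -/
open scoped Classical

namespace Stmt4Aux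

lemma odet_self_left (p q : Pt) : odet p q p = 0 := by simp only [odet]; ring

lemma odet_self_right (p q : Pt) : odet p q q = 0 := by simp only [odet]; ring

lemma odet_swap (p q z : Pt) : odet q p z = - odet p q z := by simp only [odet]; ring

lemma odet_combo (p q a b : Pt) (c d : ℝ) (hcd : c + d = 1) :
    odet p q (c • a + d • b) = c * odet p q a + d * odet p q b := by
  have hd : d = 1 - c := by linarith
  subst hd
  simp only [odet, Prod.fst_add, Prod.snd_add, Prod.smul_fst, Prod.smul_snd, smul_eq_mul]
  ring

lemma odet_of_mem_segment (u v x : Pt) (hx : x ∈ segment ℝ u v) : odet u v x = 0 := by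
  rw [segment_eq_image] at hx
  obtain ⟨θ, _, rfl⟩ := hx
  rw [odet_combo u v u v (1-θ) θ (by ring), odet_self_left, odet_self_right]
  ring

lemma crossing (p q a b : Pt) (ha : odet p q a < 0) (hb : 0 < odet p q b) :
    ∃ x ∈ segment ℝ a b, odet p q x = 0 ∧ x ≠ a ∧ x ≠ b := by
  have hne : odet p q a - odet p q b < 0 := by linarith
  have hne' : odet p q a - odet p q b ≠ 0 := ne_of_lt hne
  obtain ⟨θ, hθ0, hθ1, hcomb⟩ :
      ∃ θ : ℝ, 0 < θ ∧ θ < 1 ∧ (1 - θ) * odet p q a + θ * odet p q b = 0 := by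
    refine ⟨odet p q a / (odet p q a - odet p q b), div_pos_of_neg_of_neg ha hne, ?_, ?_⟩
    · rw [div_lt_one_of_neg hne]; linarith
    · field_simp
      ring
  have hx0 : odet p q ((1-θ) • a + θ • b) = 0 := by
    rw [odet_combo p q a b (1-θ) θ (by ring)]
    exact hcomb
  refine ⟨(1-θ) • a + θ • b, ?_, hx0, fun h => by rw [h] at hx0; linarith,
    fun h => by rw [h] at hx0; linarith⟩
  rw [segment_eq_image]
  exact ⟨θ, ⟨hθ0.le, hθ1.le⟩, rfl⟩

lemma on_line (p q z : Pt) (hpq : p ≠ q) (hz : odet p q z = 0) :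
    ∃ t : ℝ, z = p + t • (q - p) := by
  have hz' : (q.1 - p.1) * (z.2 - p.2) - (q.2 - p.2) * (z.1 - p.1) = 0 := hz
  have hD : 0 < (q.1 - p.1)^2 + (q.2 - p.2)^2 := by
    rcases (show q.1 - p.1 ≠ 0 ∨ q.2 - p.2 ≠ 0 by
      by_contra h
      push_neg at h
      exact hpq (Prod.ext (by linarith [h.1]) (by linarith [h.2])).symm) with h | h
    · rcases h.lt_or_gt with h | h <;> nlinarith [sq_nonneg (q.2 - p.2)]
    · rcases h.lt_or_gt with h | h <;> nlinarith [sq_nonneg (q.1 - p.1)]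
  set t : ℝ := ((q.1 - p.1) * (z.1 - p.1) + (q.2 - p.2) * (z.2 - p.2)) /
      ((q.1 - p.1)^2 + (q.2 - p.2)^2) with hT
  refine ⟨t, ?_⟩
  have h1 : t * (q.1 - p.1) = z.1 - p.1 := by
    rw [hT, div_mul_eq_mul_div, div_eq_iff hD.ne']
    linear_combination (q.2 - p.2) * hz'
  have h2 : t * (q.2 - p.2) = z.2 - p.2 := by
    rw [hT, div_mul_eq_mul_div, div_eq_iff hD.ne']
    linear_combination (-(q.1 - p.1)) * hz'
  apply Prod.ext
  · simp only [Prod.fst_add, Prod.smul_fst, Prod.fst_sub, smul_eq_mul]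
    linarith
  · simp only [Prod.snd_add, Prod.smul_snd, Prod.snd_sub, smul_eq_mul]
    linarith

lemma collinear_of_odet (p q z : Pt) (hpq : p ≠ q) (hz : odet p q z = 0) :
    Collinear ℝ ({p, q, z} : Set Pt) := by
  obtain ⟨t, ht⟩ := on_line p q z hpq hz
  rw [collinear_iff_of_mem (Set.mem_insert p _)]
  refine ⟨q - p, ?_⟩
  intro x hx
  rcases hx with rfl | hx
  · exact ⟨0, by simp⟩
  rcases hx with rfl | hx
  · refine ⟨1, ?_⟩
    rw [vadd_eq_add, one_smul]
    abel
  · rw [Set.mem_singleton_iff] at hx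
    subst hx
    refine ⟨t, ?_⟩
    rw [vadd_eq_add, ht]
    abel

lemma not_on_line (S : Finset Pt) (hS : GenPos S) (p q r : Pt) (hp : p ∈ S) (hq : q ∈ S)
    (hr : r ∈ S) (hpq : p ≠ q) (hrp : r ≠ p) (hrq : r ≠ q) (h0 : odet p q r = 0) : False :=
  hS p hp q hq r hr hpq hrq.symm hrp.symm (collinear_of_odet p q r hpq h0)

lemma convex_halfplane (p q : Pt) : Convex ℝ {z : Pt | odet p q z ≤ 0} := by
  intro x hx y hy a b ha hb hab
  simp only [Set.mem_setOf_eq] at hx hy ⊢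
  rw [odet_combo p q x y a b hab]
  nlinarith

lemma halfplane_frontier (S : Finset Pt) (p q : Pt) (hp : p ∈ S) (hq : q ∈ S) (hpq : p ≠ q)
    (hall : ∀ z ∈ S, odet p q z ≤ 0) :
    segment ℝ p q ⊆ frontier (convexHull ℝ (S : Set Pt)) := by
  have hconv : Convex ℝ (convexHull ℝ (S : Set Pt)) := convex_convexHull ℝ _
  have hcl : IsClosed (convexHull ℝ (S : Set Pt)) := S.finite_toSet.isClosed_convexHull (𝕜 := ℝ)
  have hsub : convexHull ℝ (S : Set Pt) ⊆ {z | odet p q z ≤ 0} :=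
    convexHull_min (fun z hz => hall z hz) (convex_halfplane p q)
  intro x hx
  have hxhull : x ∈ convexHull ℝ (S : Set Pt) :=
    hconv.segment_subset (subset_convexHull ℝ _ hp) (subset_convexHull ℝ _ hq) hx
  have hx0 : odet p q x = 0 := by
    have := odet_of_mem_segment p q x hx
    -- need odet p q x = 0 though odet_of_mem_segment gives odet p q x = 0 directly
    exact this
  rw [hcl.frontier_eq]
  refine ⟨hxhull, fun hint => ?_⟩
  obtain ⟨ε, hε, hball⟩ := Metric.mem_nhds_iff.mp (mem_interior_iff_mem_nhds.mp hint)
  have hDpos : 0 < (q.1 - p.1)^2 + (q.2 - p.2)^2 := by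
    rcases (show q.1 - p.1 ≠ 0 ∨ q.2 - p.2 ≠ 0 by
      by_contra h
      push_neg at h
      exact hpq (Prod.ext (by linarith [h.1]) (by linarith [h.2])).symm) with h | h
    · rcases h.lt_or_gt with h | h <;> nlinarith [sq_nonneg (q.2 - p.2)]
    · rcases h.lt_or_gt with h | h <;> nlinarith [sq_nonneg (q.1 - p.1)]
  have hM : (0:ℝ) < |p.2 - q.2| + |q.1 - p.1| + 1 := by positivity
  set c : ℝ := ε / (2 * (|p.2 - q.2| + |q.1 - p.1| + 1)) with hc
  have hcpos : 0 < c := by positivity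
  have hhalf : c * (|p.2 - q.2| + |q.1 - p.1| + 1) = ε / 2 := by
    rw [hc]
    field_simp
  set y : Pt := (x.1 + c * (p.2 - q.2), x.2 + c * (q.1 - p.1)) with hy
  have hymem : y ∈ Metric.ball x ε := by
    rw [Metric.mem_ball, Prod.dist_eq, Real.dist_eq, Real.dist_eq]
    have e1 : y.1 - x.1 = c * (p.2 - q.2) := by rw [hy]; ring
    have e2 : y.2 - x.2 = c * (q.1 - p.1) := by rw [hy]; ring
    rw [e1, e2, abs_mul, abs_mul, abs_of_pos hcpos]
    have b1 : c * |p.2 - q.2| < ε := by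
      nlinarith [abs_nonneg (q.1 - p.1), abs_nonneg (p.2 - q.2),
        mul_le_mul_of_nonneg_left (show |p.2 - q.2| ≤ |p.2 - q.2| + |q.1 - p.1| + 1 by
          linarith [abs_nonneg (q.1 - p.1)]) hcpos.le]
    have b2 : c * |q.1 - p.1| < ε := by
      nlinarith [abs_nonneg (q.1 - p.1), abs_nonneg (p.2 - q.2),
        mul_le_mul_of_nonneg_left (show |q.1 - p.1| ≤ |p.2 - q.2| + |q.1 - p.1| + 1 by
          linarith [abs_nonneg (p.2 - q.2)]) hcpos.le]
    exact max_lt b1 b2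
  have hyle : odet p q y ≤ 0 := hsub (hball hymem)
  have hkey : odet p q y = odet p q x + c * ((q.1 - p.1)^2 + (q.2 - p.2)^2) := by
    rw [hy]
    simp only [odet]
    ring
  nlinarith [mul_pos hcpos hDpos]

lemma beyond_frontier (S : Finset Pt) (p q x : Pt)
    (hqf : q ∈ frontier (convexHull ℝ (S : Set Pt)))
    (hphull : p ∈ convexHull ℝ (S : Set Pt)) (hxhull : x ∈ convexHull ℝ (S : Set Pt))
    (t : ℝ) (ht : 1 < t) (hx : x = p + t • (q - p)) :
    segment ℝ p q ⊆ frontier (convexHull ℝ (S : Set Pt)) := by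
  have hconv : Convex ℝ (convexHull ℝ (S : Set Pt)) := convex_convexHull ℝ _
  have hcl : IsClosed (convexHull ℝ (S : Set Pt)) := S.finite_toSet.isClosed_convexHull (𝕜 := ℝ)
  have hqhull : q ∈ convexHull ℝ (S : Set Pt) := by
    rw [← hcl.closure_eq]; exact frontier_subset_closure hqf
  have hqni : q ∉ interior (convexHull ℝ (S : Set Pt)) := fun h => hqf.2 h
  intro y hy
  have hyhull : y ∈ convexHull ℝ (S : Set Pt) := hconv.segment_subset hphull hqhull hy
  rw [segment_eq_image'] at hy
  obtain ⟨a, ⟨ha0, ha1⟩, rfl⟩ := hy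
  rw [hcl.frontier_eq]
  refine ⟨hyhull, fun hint => ?_⟩
  by_cases hA : a = 1
  · subst hA
    apply hqni
    beta_reduce at hint
    have he : p + (1:ℝ) • (q - p) = q := by rw [one_smul]; abel
    rwa [he] at hint
  · have ha1' : a < 1 := lt_of_le_of_ne ha1 hA
    have hta : 0 < t - a := by linarith
    set θ : ℝ := (1 - a) / (t - a) with hθ
    have hθ0 : 0 < θ := div_pos (by linarith) hta
    have hθ1 : θ < 1 := by rw [hθ, div_lt_one hta]; linarith
    have hq_combo : q = (1 - θ) • (p + a • (q - p)) + θ • x := by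
      rw [hx]
      apply Prod.ext <;>
        simp only [Prod.fst_add, Prod.snd_add, Prod.smul_fst, Prod.smul_snd, Prod.fst_sub,
          Prod.snd_sub, smul_eq_mul, hθ] <;>
        field_simp <;> ring
    apply hqni
    rw [hq_combo]
    exact hconv.combo_interior_closure_mem_interior hint (subset_closure hxhull)
      (by linarith) hθ0.le (by ring)

lemma mid_frontier (S : Finset Pt) (p q x : Pt)
    (hphull : p ∈ convexHull ℝ (S : Set Pt)) (hqhull : q ∈ convexHull ℝ (S : Set Pt))
    (θ : ℝ) (hθ0 : 0 < θ) (hθ1 : θ < 1) (hx : x = p + θ • (q - p))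
    (hxf : x ∈ frontier (convexHull ℝ (S : Set Pt))) :
    segment ℝ p q ⊆ frontier (convexHull ℝ (S : Set Pt)) := by
  have hconv : Convex ℝ (convexHull ℝ (S : Set Pt)) := convex_convexHull ℝ _
  have hcl : IsClosed (convexHull ℝ (S : Set Pt)) := S.finite_toSet.isClosed_convexHull (𝕜 := ℝ)
  have hxni : x ∉ interior (convexHull ℝ (S : Set Pt)) := fun h => hxf.2 h
  intro y hy
  have hyhull : y ∈ convexHull ℝ (S : Set Pt) := hconv.segment_subset hphull hqhull hy
  rw [segment_eq_image'] at hy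
  obtain ⟨a, ⟨ha0, ha1⟩, rfl⟩ := hy
  rw [hcl.frontier_eq]
  refine ⟨hyhull, fun hint => ?_⟩
  rcases lt_trichotomy a θ with haθ | haθ | haθ
  · -- x between y and q
    set c : ℝ := (θ - a) / (1 - a) with hC
    have h1a : 0 < 1 - a := by linarith
    have hc0 : 0 < c := div_pos (by linarith) h1a
    have hc1 : c < 1 := by rw [hC, div_lt_one h1a]; linarith
    have hx_combo : x = (1 - c) • (p + a • (q - p)) + c • q := by
      rw [hx]
      apply Prod.ext <;>
        simp only [Prod.fst_add, Prod.snd_add, Prod.smul_fst, Prod.smul_snd, Prod.fst_sub,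
          Prod.snd_sub, smul_eq_mul, hC] <;>
        field_simp <;> ring
    apply hxni
    rw [hx_combo]
    exact hconv.combo_interior_closure_mem_interior hint (subset_closure hqhull)
      (by linarith) hc0.le (by ring)
  · apply hxni
    beta_reduce at hint
    rw [hx, ← haθ]
    exact hint
  · -- x between y and p
    set c : ℝ := (a - θ) / a with hC
    have ha0' : 0 < a := lt_trans hθ0 haθ
    have hc0 : 0 < c := div_pos (by linarith) ha0'
    have hc1 : c < 1 := by rw [hC, div_lt_one ha0']; linarith
    have hx_combo : x = (1 - c) • (p + a • (q - p)) + c • p := by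
      rw [hx]
      apply Prod.ext <;>
        simp only [Prod.fst_add, Prod.snd_add, Prod.smul_fst, Prod.smul_snd, Prod.fst_sub,
          Prod.snd_sub, smul_eq_mul, hC] <;>
        field_simp <;> ring
    apply hxni
    rw [hx_combo]
    exact hconv.combo_interior_closure_mem_interior hint (subset_closure hphull)
      (by linarith) hc0.le (by ring)

lemma line_cap (S : Finset Pt) (p q : Pt) (hp : p ∈ S) (hq : q ∈ S) (hpq : p ≠ q)
    (hpf : p ∈ frontier (convexHull ℝ (S : Set Pt)))
    (hqf : q ∈ frontier (convexHull ℝ (S : Set Pt)))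
    (hch : ¬ segment ℝ p q ⊆ frontier (convexHull ℝ (S : Set Pt)))
    (x : Pt) (hx : x ∈ convexHull ℝ (S : Set Pt)) (hx0 : odet p q x = 0) :
    x ∈ segment ℝ p q := by
  obtain ⟨t, ht⟩ := on_line p q x hpq hx0
  rcases le_or_gt t 1 with h1 | h1
  · rcases le_or_gt 0 t with h0 | h0
    · rw [segment_eq_image']
      exact ⟨t, ⟨h0, h1⟩, ht.symm⟩
    · exfalso
      apply hch
      rw [segment_symm]
      apply beyond_frontier S q p x hpf (by
          rw [← (S.finite_toSet.isClosed_convexHull (𝕜 := ℝ)).closure_eq]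
          exact frontier_subset_closure hqf) hx (1 - t) (by linarith)
      rw [ht]
      apply Prod.ext <;>
        simp only [Prod.fst_add, Prod.snd_add, Prod.smul_fst, Prod.smul_snd, Prod.fst_sub,
          Prod.snd_sub, smul_eq_mul] <;> ring
  · exfalso
    exact hch (beyond_frontier S p q x hqf (subset_convexHull ℝ _ hp) hx t h1 ht)

lemma edgesOf_mem_iff (l : List Pt) (e : Pt × Pt) :
    e ∈ edgesOf l ↔ ∃ j : ℕ, ∃ h : j + 1 < l.length, e = (l[j]'(by omega), l[j+1]'h) := by
  unfold edgesOf
  rw [List.mem_iff_getElem]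
  constructor
  · rintro ⟨j, hj, rfl⟩
    rw [List.length_zip, List.length_tail] at hj
    have hj' : j + 1 < l.length := by omega
    refine ⟨j, hj', ?_⟩
    rw [List.getElem_zip, List.getElem_tail ..]
  · rintro ⟨j, hj, rfl⟩
    refine ⟨j, ?_, ?_⟩
    · rw [List.length_zip, List.length_tail]; omega
    · rw [List.getElem_zip, List.getElem_tail ..]

lemma chain_false (N : ℕ) (g : ℕ → ℝ) (i : ℕ) (hi : i + 1 < N)
    (hgi : g i = 0) (hgi1 : g (i+1) = 0)
    (hker : ∀ j, j < N → g j = 0 → j = i ∨ j = i + 1)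
    (hcross : ∀ j, j + 1 < N → ¬ (g j < 0 ∧ 0 < g (j+1)) ∧ ¬ (g (j+1) < 0 ∧ 0 < g j))
    (hs : g 0 ≤ 0) (ht : g (N - 1) ≤ 0)
    (k : ℕ) (hk : k < N) (hgk : 0 < g k) : False := by
  have hki : k ≠ i := by
    rintro rfl
    rw [hgi] at hgk
    exact lt_irrefl 0 hgk
  rcases lt_trichotomy k i with hlt | heq | hgt
  · -- k < i : walk backwards towards the head
    have claim : ∀ m, m ≤ k → 0 < g (k - m) := by
      intro m
      induction m with
      | zero => intro _; simpa using hgk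
      | succ n ih =>
        intro hm
        have h1 : 0 < g (k - n) := ih (by omega)
        have h2 : k - (n+1) + 1 = k - n := by omega
        have h3 : k - (n+1) + 1 < N := by omega
        have h4 := (hcross (k - (n+1)) h3).1
        rw [h2] at h4
        rcases lt_trichotomy (g (k - (n+1))) 0 with h | h | h
        · exact absurd ⟨h, h1⟩ h4
        · rcases hker _ (by omega) h with h' | h' <;> omega
        · exact h
    have hfin := claim k le_rfl
    rw [Nat.sub_self] at hfin
    linarith
  · exact hki heq
  · -- i < k : walk forwards towards the tail
    have hki1 : k ≠ i + 1 := by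
      rintro rfl
      rw [hgi1] at hgk
      exact lt_irrefl 0 hgk
    have hk2 : i + 1 < k := by omega
    have claim : ∀ m, k + m ≤ N - 1 → 0 < g (k + m) := by
      intro m
      induction m with
      | zero => intro _; simpa using hgk
      | succ n ih =>
        intro hm
        have h1 : 0 < g (k + n) := ih (by omega)
        have h3 : (k + n) + 1 < N := by omega
        have h4 := (hcross (k + n) h3).2
        rcases lt_trichotomy (g (k + n + 1)) 0 with h | h | h
        · exact absurd ⟨h, h1⟩ h4
        · rcases hker _ (by omega) h with h' | h' <;> omega
        · have he : k + (n + 1) = k + n + 1 := by omega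
          rw [he]
          exact h
    have hfin := claim (N - 1 - k) (by omega)
    have h5 : k + (N - 1 - k) = N - 1 := by omega
    rw [h5] at hfin
    linarith

lemma head_idx (l : List Pt) (s : Pt) (h : l.head? = some s) :
    ∃ h0 : 0 < l.length, l[0] = s := by
  have hne : l ≠ [] := by rintro rfl; simp at h
  have h0 : 0 < l.length := List.length_pos_iff.mpr hne
  refine ⟨h0, ?_⟩
  rw [List.head?_eq_head hne] at h
  rw [← List.head_eq_getElem hne]
  exact Option.some_injective _ h

lemma last_idx (l : List Pt) (t : Pt) (h : l.getLast? = some t) :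
    ∃ h0 : 0 < l.length, l[l.length - 1] = t := by
  have hne : l ≠ [] := by rintro rfl; simp at h
  have h0 : 0 < l.length := List.length_pos_iff.mpr hne
  refine ⟨h0, ?_⟩
  rw [List.getLast?_eq_getLast hne] at h
  rw [← List.getLast_eq_getElem hne]
  exact Option.some_injective _ h

end Stmt4Aux

/-- a plane spanning path whose endpoints are adjacent hull points
is chord-free. -/
theorem stmt4 (S : Finset Pt) (hS : GenPos S) (l : List Pt) (s t : Pt)
    (hl : PlanePath S l) (hhead : l.head? = some s) (hlast : l.getLast? = some t)
    (hst : LevelEdge S s t) :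
    ChordFree S l := by
  classical
  obtain ⟨hnd, htf, hplan⟩ := hl
  intro e he hp0 hq0
  have hcl : IsClosed (convexHull ℝ (S : Set Pt)) := S.finite_toSet.isClosed_convexHull (𝕜 := ℝ)
  have hconv : Convex ℝ (convexHull ℝ (S : Set Pt)) := convex_convexHull ℝ _
  obtain ⟨i, hi, he_eq⟩ := (Stmt4Aux.edgesOf_mem_iff l e).mp he
  have hi0 : i < l.length := by omega
  obtain ⟨p, q⟩ := e
  rw [Prod.mk.injEq] at he_eq
  obtain ⟨hpl, hql⟩ := he_eq
  dsimp only at hp0 hq0 ⊢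
  -- basic facts about p and q
  have hp' : p ∈ S ∧ p ∈ frontier (convexHull ℝ (S : Set Pt)) := by
    have h := hp0
    rw [layer, Finset.mem_filter] at h
    exact ⟨h.1, h.2.2⟩
  have hq' : q ∈ S ∧ q ∈ frontier (convexHull ℝ (S : Set Pt)) := by
    have h := hq0
    rw [layer, Finset.mem_filter] at h
    exact ⟨h.1, h.2.2⟩
  obtain ⟨hpS, hpf⟩ := hp'
  obtain ⟨hqS, hqf⟩ := hq'
  have hpq : p ≠ q := by
    intro h
    rw [hpl, hql] at h
    have := (hnd.getElem_inj_iff).mp h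
    omega
  refine ⟨hp0, hq0, hpq, ?_⟩
  by_contra hch
  -- head and last of the path
  obtain ⟨h0len, hsl⟩ := Stmt4Aux.head_idx l s hhead
  obtain ⟨h0len2, htl⟩ := Stmt4Aux.last_idx l t hlast
  obtain ⟨hsL, htL, hstne, hstseg⟩ := hst
  have hsS : s ∈ S := by
    have h := hsL
    rw [layer, Finset.mem_filter] at h
    exact h.1
  have htS : t ∈ S := by
    have h := htL
    rw [layer, Finset.mem_filter] at h
    exact h.1
  have hphull : p ∈ convexHull ℝ (S : Set Pt) := subset_convexHull ℝ _ hpS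
  have hqhull : q ∈ convexHull ℝ (S : Set Pt) := subset_convexHull ℝ _ hqS
  -- the endpoints of the path are not strictly separated by the line through p and q
  have hside : ∀ u v : Pt, u ∈ S → v ∈ S → u ≠ v →
      segment ℝ u v ⊆ frontier (convexHull ℝ (S : Set Pt)) →
      odet p q u < 0 → 0 < odet p q v → False := by
    intro u v hu hv huv husegf hu0 hv0
    obtain ⟨x, hxseg, hx0, hxu, hxv⟩ := Stmt4Aux.crossing p q u v hu0 hv0
    have hxf := husegf hxseg
    have hxhull : x ∈ convexHull ℝ (S : Set Pt) := by
      rw [← hcl.closure_eq]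
      exact frontier_subset_closure hxf
    have hxpq := Stmt4Aux.line_cap S p q hpS hqS hpq hpf hqf hch x hxhull hx0
    have hxnp : x ≠ p := by
      intro hxp
      refine Stmt4Aux.not_on_line S hS u v p hu hv hpS huv ?_ ?_ ?_
      · rw [← hxp]; exact hxu
      · rw [← hxp]; exact hxv
      · rw [← hxp]; exact Stmt4Aux.odet_of_mem_segment u v x hxseg
    have hxnq : x ≠ q := by
      intro hxq
      refine Stmt4Aux.not_on_line S hS u v q hu hv hqS huv ?_ ?_ ?_
      · rw [← hxq]; exact hxu
      · rw [← hxq]; exact hxv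
      · rw [← hxq]; exact Stmt4Aux.odet_of_mem_segment u v x hxseg
    rw [segment_eq_image'] at hxpq
    obtain ⟨θ, ⟨h0θ, h1θ⟩, hxe⟩ := hxpq
    beta_reduce at hxe
    have hθ0 : θ ≠ 0 := by
      intro h
      subst h
      rw [zero_smul, add_zero] at hxe
      exact hxnp hxe.symm
    have hθ1 : θ ≠ 1 := by
      intro h
      subst h
      rw [one_smul] at hxe
      apply hxnq
      rw [← hxe]
      abel
    exact hch (Stmt4Aux.mid_frontier S p q x hphull hqhull θ (lt_of_le_of_ne h0θ (Ne.symm hθ0))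
      (lt_of_le_of_ne h1θ hθ1) hxe.symm hxf)
  have hboth : (odet p q s ≤ 0 ∧ odet p q t ≤ 0) ∨ (0 ≤ odet p q s ∧ 0 ≤ odet p q t) := by
    rcases le_or_gt (odet p q s) 0 with h | h
    · rcases le_or_gt (odet p q t) 0 with h' | h'
      · exact Or.inl ⟨h, h'⟩
      · right
        refine ⟨?_, h'.le⟩
        by_contra hc
        push_neg at hc
        exact hside s t hsS htS hstne hstseg hc h'
    · rcases le_or_gt (odet p q t) 0 with h' | h'
      · right
        refine ⟨h.le, ?_⟩
        by_contra hc
        push_neg at hc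
        exact hside t s htS hsS hstne.symm (by rw [segment_symm]; exact hstseg) hc h
      · exact Or.inr ⟨h.le, h'.le⟩
  -- the edge (p, q) of the path
  have hpq_edge : (p, q) ∈ edgesOf l := by
    rw [Stmt4Aux.edgesOf_mem_iff]
    refine ⟨i, hi, ?_⟩
    rw [Prod.mk.injEq]
    exact ⟨hpl, hql⟩
  -- no edge of the path strictly crosses the line through p and q
  have hfinish : ∀ a b x : Pt, (a, b) ∈ edgesOf l → (a, b) ≠ (p, q) →
      x ∈ segment ℝ a b → odet p q x = 0 → x ≠ a → x ≠ b → False := by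
    intro a b x hab hne hxseg hx0 hxa hxb
    have habS : a ∈ S ∧ b ∈ S := by
      obtain ⟨j, hj, hab_eq⟩ := (Stmt4Aux.edgesOf_mem_iff l (a,b)).mp hab
      rw [Prod.mk.injEq] at hab_eq
      constructor
      · rw [hab_eq.1, ← htf]; exact List.mem_toFinset.mpr (List.getElem_mem _)
      · rw [hab_eq.2, ← htf]; exact List.mem_toFinset.mpr (List.getElem_mem _)
    have hxhull : x ∈ convexHull ℝ (S : Set Pt) :=
      hconv.segment_subset (subset_convexHull ℝ _ habS.1) (subset_convexHull ℝ _ habS.2) hxseg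
    have hxpq := Stmt4Aux.line_cap S p q hpS hqS hpq hpf hqf hch x hxhull hx0
    have hmem := hplan (a,b) hab (p,q) hpq_edge hne ⟨hxseg, hxpq⟩
    rcases hmem.1 with h | h
    · exact hxa h
    · rw [Set.mem_singleton_iff] at h
      exact hxb h
  have hcross0 : ∀ a b : Pt, (a, b) ∈ edgesOf l →
      ¬ (odet p q a < 0 ∧ 0 < odet p q b) ∧ ¬ (odet p q b < 0 ∧ 0 < odet p q a) := by
    intro a b hab
    constructor
    · rintro ⟨ha, hb⟩
      obtain ⟨x, hxseg, hx0, hxa, hxb⟩ := Stmt4Aux.crossing p q a b ha hb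
      have hne : (a, b) ≠ (p, q) := by
        intro h
        rw [Prod.mk.injEq] at h
        rw [h.1, Stmt4Aux.odet_self_left] at ha
        exact lt_irrefl 0 ha
      exact hfinish a b x hab hne hxseg hx0 hxa hxb
    · rintro ⟨hb, ha⟩
      obtain ⟨x, hxseg, hx0, hxb, hxa⟩ := Stmt4Aux.crossing p q b a hb ha
      have hne : (a, b) ≠ (p, q) := by
        intro h
        rw [Prod.mk.injEq] at h
        rw [h.2, Stmt4Aux.odet_self_right] at hb
        exact lt_irrefl 0 hb
      have hxseg' : x ∈ segment ℝ a b := by rw [segment_symm]; exact hxseg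
      exact hfinish a b x hab hne hxseg' hx0 hxa hxb
  -- index versions of all the data needed for the discrete walk argument
  have hgi : odet p q (l.getD i (0,0)) = 0 := by
    rw [List.getD_eq_getElem l (0,0) hi0, ← hpl]
    exact Stmt4Aux.odet_self_left p q
  have hgi1 : odet p q (l.getD (i+1) (0,0)) = 0 := by
    rw [List.getD_eq_getElem l (0,0) hi, ← hql]
    exact Stmt4Aux.odet_self_right p q
  have hker : ∀ j, j < l.length → odet p q (l.getD j (0,0)) = 0 → j = i ∨ j = i + 1 := by
    intro j hj h0
    rw [List.getD_eq_getElem l (0,0) hj] at h0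
    have hjS : l[j] ∈ S := by rw [← htf]; exact List.mem_toFinset.mpr (List.getElem_mem _)
    by_cases hjp : l[j] = p
    · left
      rw [hpl] at hjp
      exact (hnd.getElem_inj_iff).mp hjp
    · by_cases hjq : l[j] = q
      · right
        rw [hql] at hjq
        exact (hnd.getElem_inj_iff).mp hjq
      · exact absurd h0 (fun h0 =>
          Stmt4Aux.not_on_line S hS p q (l[j]) hpS hqS hjS hpq hjp hjq h0)
  have hcrossIdx : ∀ j, j + 1 < l.length →
      ¬ (odet p q (l.getD j (0,0)) < 0 ∧ 0 < odet p q (l.getD (j+1) (0,0))) ∧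
      ¬ (odet p q (l.getD (j+1) (0,0)) < 0 ∧ 0 < odet p q (l.getD j (0,0))) := by
    intro j hj
    rw [List.getD_eq_getElem l (0,0) (show j < l.length by omega),
      List.getD_eq_getElem l (0,0) hj]
    exact hcross0 _ _ ((Stmt4Aux.edgesOf_mem_iff l _).mpr ⟨j, hj, rfl⟩)
  rcases hboth with ⟨hs0, ht0⟩ | ⟨hs0, ht0⟩
  · obtain ⟨w, hwS, hw0⟩ : ∃ w ∈ S, 0 < odet p q w := by
      by_contra hno
      push_neg at hno
      exact hch (Stmt4Aux.halfplane_frontier S p q hpS hqS hpq hno)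
    obtain ⟨k, hk, hkw⟩ := List.mem_iff_getElem.mp
      (show w ∈ l by rw [← List.mem_toFinset, htf]; exact hwS)
    refine Stmt4Aux.chain_false l.length (fun j => odet p q (l.getD j (0,0))) i hi hgi hgi1
      hker hcrossIdx ?_ ?_ k hk ?_
    · show odet p q (l.getD 0 (0,0)) ≤ 0
      rw [List.getD_eq_getElem l (0,0) h0len, hsl]
      exact hs0
    · show odet p q (l.getD (l.length - 1) (0,0)) ≤ 0
      rw [List.getD_eq_getElem l (0,0) (by omega), htl]
      exact ht0
    · show 0 < odet p q (l.getD k (0,0))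
      rw [List.getD_eq_getElem l (0,0) hk, hkw]
      exact hw0
  · obtain ⟨w, hwS, hw0⟩ : ∃ w ∈ S, odet p q w < 0 := by
      by_contra hno
      push_neg at hno
      apply hch
      rw [segment_symm]
      refine Stmt4Aux.halfplane_frontier S q p hqS hpS hpq.symm (fun z hz => ?_)
      rw [Stmt4Aux.odet_swap]
      linarith [hno z hz]
    obtain ⟨k, hk, hkw⟩ := List.mem_iff_getElem.mp
      (show w ∈ l by rw [← List.mem_toFinset, htf]; exact hwS)
    refine Stmt4Aux.chain_false l.length (fun j => - odet p q (l.getD j (0,0))) i hi ?_ ?_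
      ?_ ?_ ?_ ?_ k hk ?_
    · show - odet p q (l.getD i (0,0)) = 0
      rw [hgi, neg_zero]
    · show - odet p q (l.getD (i+1) (0,0)) = 0
      rw [hgi1, neg_zero]
    · intro j hj h0
      refine hker j hj ?_
      have h0' : - odet p q (l.getD j (0,0)) = 0 := h0
      linarith
    · intro j hj
      have h := hcrossIdx j hj
      constructor
      · rintro ⟨h1, h2⟩
        have h1' : - odet p q (l.getD j (0,0)) < 0 := h1
        have h2' : 0 < - odet p q (l.getD (j+1) (0,0)) := h2
        exact h.2 ⟨by linarith, by linarith⟩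
      · rintro ⟨h1, h2⟩
        have h1' : - odet p q (l.getD (j+1) (0,0)) < 0 := h1
        have h2' : 0 < - odet p q (l.getD j (0,0)) := h2
        exact h.1 ⟨by linarith, by linarith⟩
    · show - odet p q (l.getD 0 (0,0)) ≤ 0
      rw [List.getD_eq_getElem l (0,0) h0len, hsl]
      linarith
    · show - odet p q (l.getD (l.length - 1) (0,0)) ≤ 0
      rw [List.getD_eq_getElem l (0,0) (by omega), htl]
      linarith
    · show 0 < - odet p q (l.getD k (0,0))
      rw [List.getD_eq_getElem l (0,0) hk, hkw]
      linarith
end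

section
/- Let S be a finite point set in general position and let s, t be two distinct points on the boundary of conv(S). Then there exists a plane spanning st-path P on S that is strongly suffix-independent, i.e., both P (directed from s to t) and its reversal (directed from t to s) are suffix-independent. -/
open scoped Classical

section Stmt10Aux

/-! ### Elementary planar vector algebra -/

/-- dot product on `ℝ × ℝ`. -/
def dt (a b : Pt) : ℝ := a.1 * b.1 + a.2 * b.2

/-- cross product on `ℝ × ℝ`. -/
def cr (a b : Pt) : ℝ := a.1 * b.2 - a.2 * b.1

/-- rotation by 90 degrees. -/
def rot (a : Pt) : Pt := (-a.2, a.1)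

lemma cr_swap (a b : Pt) : cr a b = - cr b a := by simp [cr]; try ring

lemma cr_self (a : Pt) : cr a a = 0 := by unfold cr; try ring

lemma dt_comm (a b : Pt) : dt a b = dt b a := by simp [dt]; try ring

lemma dt_nonneg (a : Pt) : 0 ≤ dt a a := by
  simp only [dt]; nlinarith [mul_self_nonneg a.1, mul_self_nonneg a.2]

lemma dt_self_pos {a : Pt} (h : a ≠ 0) : 0 < dt a a := by
  rcases (dt_nonneg a).lt_or_eq with h0 | h0
  · exact h0
  · exfalso; apply h
    simp only [dt] at h0
    have h1 : a.1 = 0 := by nlinarith [mul_self_nonneg a.1, mul_self_nonneg a.2]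
    have h2 : a.2 = 0 := by nlinarith [mul_self_nonneg a.1, mul_self_nonneg a.2]
    exact Prod.ext_iff.mpr ⟨by simp [h1], by simp [h2]⟩

lemma cr_rot_right (z a : Pt) : cr z (rot a) = dt z a := by simp [cr, rot, dt]; try ring

lemma cr_rot_left (a z : Pt) : cr (rot a) z = - dt a z := by simp [cr, rot, dt]; try ring

lemma rot_ne_zero {a : Pt} (h : a ≠ 0) : rot a ≠ 0 := by
  intro hc
  apply h
  rw [Prod.ext_iff] at hc ⊢
  simp [rot] at hc
  exact ⟨hc.2, hc.1⟩

lemma cr_smul_left (c : ℝ) (x y : Pt) : cr (c • x) y = c * cr x y := by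
  simp [cr, Prod.smul_fst, Prod.smul_snd, smul_eq_mul]; try ring

lemma cr_sub_right (c x y : Pt) : cr c (x - y) = cr c x - cr c y := by
  simp [cr, Prod.fst_sub, Prod.snd_sub]; try ring

lemma dt_sub_right (c x y : Pt) : dt c (x - y) = dt c x - dt c y := by
  simp [dt, Prod.fst_sub, Prod.snd_sub]; try ring

lemma dt_add_smul_left (a h z : Pt) (e : ℝ) : dt (a + e • h) z = dt a z + e * dt h z := by
  simp [dt, Prod.fst_add, Prod.snd_add, Prod.smul_fst, Prod.smul_snd, smul_eq_mul]; try ring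

lemma cr_add_smul_left (a h z : Pt) (e : ℝ) : cr (a + e • h) z = cr a z + e * cr h z := by
  simp [cr, Prod.fst_add, Prod.snd_add, Prod.smul_fst, Prod.smul_snd, smul_eq_mul]; try ring

/-- decomposition of a vector parallel to `v`. -/
lemma decomp {z v : Pt} (h : cr z v = 0) (hv : v ≠ 0) : z = (dt z v / dt v v) • v := by
  have hvv := dt_self_pos hv
  simp only [cr] at h
  have key : dt v v • z = dt z v • v := by
    rw [Prod.ext_iff]
    constructor
    · simp only [dt, Prod.smul_fst, smul_eq_mul]
      linear_combination v.2 * h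
    · simp only [dt, Prod.smul_snd, smul_eq_mul]
      linear_combination (-v.1) * h
  have h2 := congrArg (fun x : Pt => (dt v v)⁻¹ • x) key
  simp only [smul_smul, inv_mul_cancel₀ (ne_of_gt hvv), one_smul] at h2
  rw [div_eq_inv_mul]
  exact h2

lemma indep_zero {a h z : Pt} (hah : cr a h ≠ 0) (h1 : dt a z = 0) (h2 : dt h z = 0) :
    z = 0 := by
  by_contra hz
  have hrz : rot z ≠ 0 := rot_ne_zero hz
  have ha : a = (dt a (rot z) / dt (rot z) (rot z)) • rot z :=
    decomp (by rw [cr_rot_right]; rwa [dt_comm] at h1 ⊢) hrz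
  have hh : h = (dt h (rot z) / dt (rot z) (rot z)) • rot z :=
    decomp (by rw [cr_rot_right]; rwa [dt_comm] at h2 ⊢) hrz
  apply hah
  rw [ha, hh, cr_smul_left, cr_swap, cr_smul_left, cr_self]
  ring

/-- 2D Cramer identity. -/
lemma cramer_dt (w u v z : Pt) : cr u v * dt w z = cr z v * dt w u + cr u z * dt w v := by
  simp [cr, dt]; try ring

lemma kappa_iden (w a b : Pt) : cr w a * dt w b - cr w b * dt w a = - (dt w w) * cr a b := by
  simp [cr, dt]; try ring

lemma lagrange (u v : Pt) : dt u u * dt v v - dt u v ^ 2 = cr u v ^ 2 := by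
  simp [cr, dt]; try ring

/-! ### convexity helpers -/

lemma cr_comb (c o u v : Pt) {α β : ℝ} (hab : α + β = 1) :
    cr c (α • u + β • v - o) = α * cr c (u - o) + β * cr c (v - o) := by
  simp only [cr, Prod.fst_add, Prod.snd_add, Prod.fst_sub, Prod.snd_sub,
    Prod.smul_fst, Prod.smul_snd, smul_eq_mul]
  linear_combination (c.1 * o.2 - c.2 * o.1) * hab

lemma not_mem_hull_pos (c o p : Pt) (X : Set Pt) (hX : ∀ x ∈ X, 0 < cr c (x - o))
    (hp : cr c (p - o) ≤ 0) : p ∉ convexHull ℝ X := by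
  have hconv : Convex ℝ {y : Pt | 0 < cr c (y - o)} := by
    intro x hx y hy α β hα hβ hab
    simp only [Set.mem_setOf_eq] at *
    rw [cr_comb c o x y hab]
    rcases hα.lt_or_eq with h' | h'
    · nlinarith
    · nlinarith
  intro hmem
  have hsub : convexHull ℝ X ⊆ {y : Pt | 0 < cr c (y - o)} := convexHull_min hX hconv
  have := hsub hmem
  simp only [Set.mem_setOf_eq] at this
  linarith

lemma cr_neg_left (c z : Pt) : cr (-c) z = - cr c z := by
  simp [cr]; try ring

lemma not_mem_hull_neg (c o p : Pt) (X : Set Pt) (hX : ∀ x ∈ X, cr c (x - o) < 0)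
    (hp : 0 ≤ cr c (p - o)) : p ∉ convexHull ℝ X := by
  apply not_mem_hull_pos (-c) o p X
  · intro x hx; rw [cr_neg_left]; linarith [hX x hx]
  · rw [cr_neg_left]; linarith

lemma seg_side_le {c o u v : Pt} (hu : cr c (u - o) ≤ 0) (hv : cr c (v - o) ≤ 0) :
    ∀ y ∈ segment ℝ u v, cr c (y - o) ≤ 0 := by
  rintro y ⟨α, β, hα, hβ, hab, rfl⟩
  rw [cr_comb c o u v hab]
  nlinarith

lemma seg_side_pos {c o u v : Pt} (hu : 0 < cr c (u - o)) (hv : 0 < cr c (v - o)) :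
    ∀ y ∈ segment ℝ u v, 0 < cr c (y - o) := by
  rintro y ⟨α, β, hα, hβ, hab, rfl⟩
  rw [cr_comb c o u v hab]
  rcases hα.lt_or_eq with h' | h'
  · nlinarith
  · nlinarith

lemma seg_side_endpoint {c o u v : Pt} (hu : cr c (u - o) < 0) (hv : cr c (v - o) = 0) :
    ∀ y ∈ segment ℝ u v, cr c (y - o) = 0 → y = v := by
  rintro y ⟨α, β, hα, hβ, hab, rfl⟩ hy
  rw [cr_comb c o u v hab, hv, mul_zero, add_zero] at hy
  have hα0 : α = 0 := by
    rcases hα.lt_or_eq with h' | h'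
    · exfalso; nlinarith
    · exact h'.symm
  have hβ1 : β = 1 := by linarith
  rw [hα0, hβ1, zero_smul, one_smul, zero_add]

/-! ### edges of a list -/

lemma mem_edgesOf {l : List Pt} {e : Pt × Pt} :
    e ∈ edgesOf l ↔ ∃ i : ℕ, ∃ h : i + 1 < l.length,
      l[i]'(by omega) = e.1 ∧ l[i+1]'h = e.2 := by
  unfold edgesOf
  rw [List.mem_iff_getElem]
  constructor
  · rintro ⟨i, hi, hget⟩
    have hi' : i + 1 < l.length := by
      simp only [List.length_zip, List.length_tail] at hi
      omega
    refine ⟨i, hi', ?_, ?_⟩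
    · rw [← hget, List.getElem_zip]
    · rw [← hget, List.getElem_zip]
      simp [List.getElem_tail]
  · rintro ⟨i, hi, h1, h2⟩
    have hlen : i < (l.zip l.tail).length := by
      simp only [List.length_zip, List.length_tail]
      omega
    refine ⟨i, hlen, ?_⟩
    rw [List.getElem_zip]
    have : l.tail[i]'(by simp [List.length_tail]; omega) = l[i+1]'hi := by
      simp [List.getElem_tail]
    rw [this, h1, h2]

lemma mem_edgesOf_reverse {l : List Pt} {e : Pt × Pt} :
    e ∈ edgesOf l.reverse ↔ (e.2, e.1) ∈ edgesOf l := by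
  rw [mem_edgesOf, mem_edgesOf]
  constructor
  · rintro ⟨i, hi, h1, h2⟩
    rw [List.length_reverse] at hi
    rw [List.getElem_reverse] at h1 h2
    refine ⟨l.length - 2 - i, by omega, ?_, ?_⟩
    · show l[l.length - 2 - i]'(by omega) = e.2
      rw [← h2]
      congr 1
      omega
    · show l[l.length - 2 - i + 1]'(by omega) = e.1
      rw [← h1]
      congr 1
      omega
  · rintro ⟨i, hi, h1, h2⟩
    have h1' : l[i]'(by omega) = e.2 := h1
    have h2' : l[i+1]'hi = e.1 := h2
    refine ⟨l.length - 2 - i, by rw [List.length_reverse]; omega, ?_, ?_⟩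
    · rw [List.getElem_reverse, ← h2']
      congr 1
      omega
    · rw [List.getElem_reverse, ← h1']
      congr 1
      omega

lemma planePath_reverse {S : Finset Pt} {l : List Pt} (h : PlanePath S l) :
    PlanePath S l.reverse := by
  obtain ⟨hnd, htf, hcr⟩ := h
  refine ⟨by simpa using hnd, by simpa using htf, ?_⟩
  intro e he f hf hef
  have he' := mem_edgesOf_reverse.mp he
  have hf' := mem_edgesOf_reverse.mp hf
  have hef' : (e.2, e.1) ≠ (f.2, f.1) := by
    intro hc
    apply hef
    rw [Prod.ext_iff] at hc ⊢
    exact ⟨hc.2, hc.1⟩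
  have := hcr _ he' _ hf' hef'
  intro y hy
  have hy' : y ∈ segment ℝ e.2 e.1 ∩ segment ℝ f.2 f.1 := by
    rw [segment_symm, Set.inter_comm, segment_symm, Set.inter_comm]
    exact hy
  have := this hy'
  simp only [Set.mem_inter_iff, Set.mem_insert_iff, Set.mem_singleton_iff] at this ⊢
  tauto

/-! ### properties of angularly sorted lists -/

lemma suffixIndep_of_pairwise_pos (o : Pt) (m : List Pt)
    (h : m.Pairwise fun p q => 0 < cr (p - o) (q - o)) : SuffixIndep m := by
  intro i hi p hp
  have hall : (m.take i ++ m.drop i).Pairwise (fun p q => 0 < cr (p - o) (q - o)) := by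
    rw [List.take_append_drop]; exact h
  have hsplit := List.pairwise_append.mp hall
  apply not_mem_hull_pos (p - o) o
  · intro x hx
    have hx' : x ∈ m.drop i := by simpa using hx
    exact hsplit.2.2 p hp x hx'
  · exact le_of_eq (cr_self _)

lemma suffixIndep_of_pairwise_neg (o : Pt) (m : List Pt)
    (h : m.Pairwise fun p q => cr (p - o) (q - o) < 0) : SuffixIndep m := by
  intro i hi p hp
  have hall : (m.take i ++ m.drop i).Pairwise (fun p q => cr (p - o) (q - o) < 0) := by
    rw [List.take_append_drop]; exact h
  have hsplit := List.pairwise_append.mp hall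
  apply not_mem_hull_neg (p - o) o
  · intro x hx
    have hx' : x ∈ m.drop i := by simpa using hx
    exact hsplit.2.2 p hp x hx'
  · exact le_of_eq (cr_self _).symm

lemma seg_side_nonneg {c o u v : Pt} (hu : 0 ≤ cr c (u - o)) (hv : 0 ≤ cr c (v - o)) :
    ∀ y ∈ segment ℝ u v, 0 ≤ cr c (y - o) := by
  rintro y ⟨α, β, hα, hβ, hab, rfl⟩
  rw [cr_comb c o u v hab]
  nlinarith

lemma cross_of_pairwise (o : Pt) (l : List Pt) (hnd : l.Nodup)
    (h : l.Pairwise fun p q => 0 < cr (p - o) (q - o)) :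
    ∀ e ∈ edgesOf l, ∀ f ∈ edgesOf l, e ≠ f →
      segment ℝ e.1 e.2 ∩ segment ℝ f.1 f.2 ⊆ ({e.1, e.2} ∩ {f.1, f.2} : Set Pt) := by
  have hpg := List.pairwise_iff_getElem.mp h
  have key : ∀ i j : ℕ, ∀ hi : i + 1 < l.length, ∀ hj : j + 1 < l.length, i < j →
      ∀ y, y ∈ segment ℝ (l[i]'(by omega)) (l[i+1]'hi) →
        y ∈ segment ℝ (l[j]'(by omega)) (l[j+1]'hj) →
        y = l[i+1]'hi ∧ j = i + 1 := by
    intro i j hi hj hij y hy1 hy2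
    set c : Pt := (l[i+1]'hi) - o with hc
    have h1 : cr c ((l[i]'(by omega)) - o) < 0 := by
      have h0 := hpg i (i+1) (by omega) hi (by omega)
      have := cr_swap ((l[i]'(by omega)) - o) c
      rw [cr_swap]
      linarith
    have h2 : cr c ((l[i+1]'hi) - o) = 0 := cr_self _
    have hyle : cr c (y - o) ≤ 0 := seg_side_le (le_of_lt h1) (le_of_eq h2) y hy1
    rcases Nat.lt_or_ge (i+1) j with hlt | hge
    · exfalso
      have h3 : 0 < cr c ((l[j]'(by omega)) - o) := hpg (i+1) j hi (by omega) hlt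
      have h4 : 0 < cr c ((l[j+1]'hj) - o) := hpg (i+1) (j+1) hi hj (by omega)
      have := seg_side_pos h3 h4 y hy2
      linarith
    · have hj1 : j = i + 1 := by omega
      subst hj1
      have h4 : 0 < cr c ((l[i+1+1]'hj) - o) := hpg (i+1) (i+1+1) hi hj (by omega)
      have hyge : 0 ≤ cr c (y - o) := seg_side_nonneg (le_of_eq h2.symm) (le_of_lt h4) y hy2
      have hy0 : cr c (y - o) = 0 := le_antisymm hyle hyge
      exact ⟨seg_side_endpoint h1 h2 y hy1 hy0, rfl⟩
  intro e he f hf hef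
  obtain ⟨i, hi, hei1, hei2⟩ := mem_edgesOf.mp he
  obtain ⟨j, hj, hfj1, hfj2⟩ := mem_edgesOf.mp hf
  rcases lt_trichotomy i j with hij | hij | hij
  · intro y hy
    obtain ⟨hy0, hjadj⟩ := key i j hi hj hij y (by rw [hei1, hei2]; exact hy.1)
      (by rw [hfj1, hfj2]; exact hy.2)
    subst hjadj
    constructor
    · simp only [Set.mem_insert_iff, Set.mem_singleton_iff]
      exact Or.inr (hy0.trans hei2)
    · simp only [Set.mem_insert_iff, Set.mem_singleton_iff]
      exact Or.inl (hy0.trans hfj1)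
  · exfalso; apply hef
    subst hij
    rw [Prod.ext_iff, ← hei1, ← hei2, ← hfj1, ← hfj2]
    exact ⟨rfl, rfl⟩
  · intro y hy
    obtain ⟨hy0, hjadj⟩ := key j i hj hi hij y (by rw [hfj1, hfj2]; exact hy.2)
      (by rw [hei1, hei2]; exact hy.1)
    subst hjadj
    constructor
    · simp only [Set.mem_insert_iff, Set.mem_singleton_iff]
      exact Or.inl (hy0.trans hei1)
    · simp only [Set.mem_insert_iff, Set.mem_singleton_iff]
      exact Or.inr (hy0.trans hfj2)

/-! ### choosing a small generic parameter -/

lemma pick_eps (F : Finset Pt) (A B : Pt → ℝ) (hA : ∀ x ∈ F, A x < 0)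
    (bad : Set ℝ) (hbad : bad.Finite) :
    ∃ ε : ℝ, 0 < ε ∧ ε ∉ bad ∧ ∀ x ∈ F, A x + ε * B x < 0 := by
  classical
  set G : Pt → ℝ := fun x => -A x / (1 + |B x|) with hG
  have hGpos : ∀ x ∈ F, 0 < G x := by
    intro x hx
    apply div_pos (by linarith [hA x hx]) (by positivity)
  set δ : ℝ := if hF : F.Nonempty then (F.image G).min' (hF.image G) else 1 with hδdef
  have hδpos : 0 < δ := by
    rw [hδdef]
    split_ifs with hF
    · obtain ⟨y, hy, hy'⟩ := Finset.mem_image.mp ((F.image G).min'_mem (hF.image G))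
      rw [← hy']
      exact hGpos y hy
    · norm_num
  have hδle : ∀ x ∈ F, δ ≤ G x := by
    intro x hx
    rw [hδdef]
    have hF : F.Nonempty := ⟨x, hx⟩
    simp only [dif_pos hF]
    exact Finset.min'_le _ _ (Finset.mem_image_of_mem G hx)
  have hinf : (Set.Ioo (0:ℝ) δ \ bad).Infinite :=
    (Set.Ioo_infinite hδpos).diff hbad
  obtain ⟨ε, hε⟩ := hinf.nonempty
  obtain ⟨⟨hε0, hεδ⟩, hεbad⟩ := hε
  refine ⟨ε, hε0, hεbad, ?_⟩
  intro x hx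
  have h1 : ε < G x := lt_of_lt_of_le hεδ (hδle x hx)
  have h2 : ε * (1 + |B x|) < -A x := by
    rw [hG] at h1
    rw [← lt_div_iff₀ (by positivity)]
    exact h1
  have h3 : ε * B x ≤ ε * |B x| :=
    mul_le_mul_of_nonneg_left (le_abs_self _) hε0.le
  nlinarith

/-! ### the sorted path construction -/

lemma main_construct (S : Finset Pt) (s t o : Pt) (hs : s ∈ S) (ht : t ∈ S) (hst : s ≠ t)
    (hgen : ∀ p ∈ S, ∀ q ∈ S, p ≠ q → cr (p - o) (q - o) ≠ 0)
    (hσs : ∀ x ∈ S, x ≠ s → 0 < cr (s - o) (x - o))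
    (hσt : ∀ x ∈ S, x ≠ t → cr (t - o) (x - o) < 0) :
    ∃ l, PlanePath S l ∧ PlanePath S l.reverse ∧ l.head? = some s ∧ l.getLast? = some t ∧
      SuffixIndep l ∧ SuffixIndep l.reverse := by
  classical
  set u : Pt := s - o with hu
  set v : Pt := t - o with hv
  have hcruv : 0 < cr u v := hσs t ht (Ne.symm hst)
  have hune : u ≠ 0 := by
    intro hc
    have := hcruv
    rw [hc] at this
    simp [cr] at this
  have hvne : v ≠ 0 := by
    intro hc
    have := hcruv
    rw [hc] at this
    simp [cr] at this
  -- construct the salient direction w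
  set su : ℝ := Real.sqrt (dt u u) with hsu
  set sv : ℝ := Real.sqrt (dt v v) with hsv
  have hsu2 : su ^ 2 = dt u u := Real.sq_sqrt (dt_nonneg u)
  have hsv2 : sv ^ 2 = dt v v := Real.sq_sqrt (dt_nonneg v)
  have hsupos : 0 < su := Real.sqrt_pos.mpr (dt_self_pos hune)
  have hsvpos : 0 < sv := Real.sqrt_pos.mpr (dt_self_pos hvne)
  have hlag : dt u u * dt v v - dt u v ^ 2 = cr u v ^ 2 := lagrange u v
  have hAd : 0 < su * sv + dt u v := by
    have key : (su * sv) ^ 2 = dt u u * dt v v := by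
      rw [mul_pow, hsu2, hsv2]
    nlinarith [key, hlag, hcruv, mul_pos hsupos hsvpos, mul_pos hcruv hcruv,
      sq_nonneg (su * sv + dt u v), sq_nonneg (su * sv - dt u v)]
  set w : Pt := sv • u + su • v with hw
  have hdtw : ∀ z : Pt, dt w z = sv * dt u z + su * dt v z := by
    intro z
    simp [hw, dt, Prod.fst_add, Prod.snd_add, Prod.smul_fst, Prod.smul_snd, smul_eq_mul]
    ring
  have hwu : 0 < dt w u := by
    rw [hdtw]
    have : dt v u = dt u v := dt_comm v u
    nlinarith
  have hwv : 0 < dt w v := by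
    rw [hdtw]
    nlinarith
  have hwp : ∀ p ∈ S, 0 < dt w (p - o) := by
    intro p hp
    by_cases hps : p = s
    · rw [hps]; exact hwu
    by_cases hpt : p = t
    · rw [hpt]; exact hwv
    have h1 : 0 < cr u (p - o) := hσs p hp hps
    have h2 : 0 < cr (p - o) v := by
      have := hσt p hp hpt
      have hsw := cr_swap v (p - o)
      rw [cr_swap]
      linarith
    have hq := cramer_dt w u v (p - o)
    nlinarith
  have hwne : w ≠ 0 := by
    intro hc
    have := hwu
    rw [hc] at this
    simp [dt] at this
  have hww : 0 < dt w w := dt_self_pos hwne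
  set κ : Pt → ℝ := fun p => cr w (p - o) / dt w (p - o) with hκ
  have hmono : ∀ p ∈ S, ∀ q ∈ S, κ p ≤ κ q → p ≠ q → 0 < cr (p - o) (q - o) := by
    intro p hp q hq hle hne
    have hdp := hwp p hp
    have hdq := hwp q hq
    rw [hκ] at hle
    simp only at hle
    rw [div_le_div_iff₀ hdp hdq] at hle
    have hiden := kappa_iden w (p - o) (q - o)
    have hne' := hgen p hp q hq hne
    rcases lt_or_gt_of_ne hne' with hlt | hgt
    · exfalso
      nlinarith [mul_pos hww (neg_pos.mpr hlt)]
    · exact hgt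
  -- sort
  set bole : Pt → Pt → Bool := fun p q => decide (κ p ≤ κ q) with hle
  set l : List Pt := S.toList.mergeSort bole with hldef
  have hperm : l.Perm S.toList := List.mergeSort_perm S.toList bole
  have hnd : l.Nodup := hperm.nodup_iff.mpr S.nodup_toList
  have htf : l.toFinset = S := by
    rw [List.toFinset_eq_of_perm _ _ hperm, Finset.toList_toFinset]
  have hmeml : ∀ x, x ∈ l ↔ x ∈ S := by
    intro x
    rw [← htf, List.mem_toFinset]
  have hsorted : l.Pairwise (fun p q => κ p ≤ κ q) := by
    have h1 := List.pairwise_mergeSort (le := bole)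
      (fun a b c hab hbc => by
        simp only [hle, decide_eq_true_eq] at *
        exact le_trans hab hbc)
      (fun a b => by
        simp only [hle, Bool.or_eq_true, decide_eq_true_eq]
        exact le_total (κ a) (κ b))
      S.toList
    rw [← hldef] at h1
    exact h1.imp (fun hab => by simpa [hle, decide_eq_true_eq] using hab)
  have hRpos : l.Pairwise fun p q => 0 < cr (p - o) (q - o) := by
    rw [List.pairwise_iff_getElem] at hsorted ⊢
    intro i j hi hj hij
    have hne : l[i] ≠ l[j] := by
      intro hc
      rw [hnd.getElem_inj_iff] at hc
      omega
    exact hmono _ ((hmeml _).mp (l.getElem_mem hi)) _ ((hmeml _).mp (l.getElem_mem hj))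
      (hsorted i j hi hj hij) hne
  have hRneg : l.reverse.Pairwise fun p q => cr (p - o) (q - o) < 0 := by
    rw [List.pairwise_reverse]
    apply hRpos.imp
    intro a b hab
    have := cr_swap (b - o) (a - o)
    linarith
  have hlen0 : 0 < l.length := by
    rcases l with _ | ⟨a, l'⟩
    · exfalso
      have := (hmeml s).mpr hs
      simp at this
    · simp
  -- head is s
  have hhead : l.head? = some s := by
    obtain ⟨j, hjlen, hjs⟩ := List.mem_iff_getElem.mp ((hmeml s).mpr hs)
    have hj0 : j = 0 := by
      by_contra hj0
      have h0j : 0 < j := Nat.pos_of_ne_zero hj0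
      have h1 := List.pairwise_iff_getElem.mp hRpos 0 j hlen0 hjlen h0j
      rw [hjs] at h1
      have h2 : l[0] ≠ s := by
        intro hc
        rw [← hjs, hnd.getElem_inj_iff] at hc
        omega
      have h3 := hσs l[0] ((hmeml _).mp (l.getElem_mem hlen0)) h2
      have := cr_swap (s - o) (l[0] - o)
      linarith
    rcases l with _ | ⟨a, l'⟩
    · simp at hlen0
    · simp only [List.head?_cons, Option.some_inj]
      rw [← hjs]
      subst hj0
      rfl
  -- last is t
  have hlast : l.getLast? = some t := by
    obtain ⟨j, hjlen, hjt⟩ := List.mem_iff_getElem.mp ((hmeml t).mpr ht)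
    have hjl : j = l.length - 1 := by
      by_contra hj1
      have hjlt : j < l.length - 1 := by omega
      have hlast_lt : j < l.length - 1 := hjlt
      have h1 := List.pairwise_iff_getElem.mp hRpos j (l.length - 1) hjlen (by omega) (by omega)
      rw [hjt] at h1
      have h2 : l[l.length - 1]'(by omega) ≠ t := by
        intro hc
        have hc2 := hnd.getElem_inj_iff.mp (hc.trans hjt.symm)
        omega
      have h3 := hσt (l[l.length - 1]'(by omega)) ((hmeml _).mp (l.getElem_mem (by omega))) h2
      linarith
    have hlne : l ≠ [] := by
      intro hc; rw [hc] at hlen0; simp at hlen0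
    rw [List.getLast?_eq_getLast hlne, List.getLast_eq_getElem hlne, Option.some_inj,
      ← hjt]
    subst hjl
    rfl
  refine ⟨l, ⟨hnd, htf, cross_of_pairwise o l hnd hRpos⟩, ?_, hhead, hlast,
    suffixIndep_of_pairwise_pos o l hRpos, suffixIndep_of_pairwise_neg o l.reverse hRneg⟩
  exact planePath_reverse ⟨hnd, htf, cross_of_pairwise o l hnd hRpos⟩

/-! ### existence of the pivot point -/

lemma exists_pivot (S : Finset Pt) (s t : Pt) (hs : s ∈ S) (ht : t ∈ S) (hst : s ≠ t)
    (ha : ∃ a : Pt, ∀ x ∈ S, x ≠ s → dt a x < dt a s)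
    (hb : ∃ b : Pt, ∀ x ∈ S, x ≠ t → dt b x < dt b t) :
    ∃ o : Pt,
      (∀ p ∈ S, ∀ q ∈ S, p ≠ q → cr (p - o) (q - o) ≠ 0) ∧
      ((∀ x ∈ S, x ≠ s → 0 < cr (s - o) (x - o)) ∧
        (∀ x ∈ S, x ≠ t → cr (t - o) (x - o) < 0) ∨
       (∀ x ∈ S, x ≠ t → 0 < cr (t - o) (x - o)) ∧
        (∀ x ∈ S, x ≠ s → cr (s - o) (x - o) < 0)) := by
  classical
  obtain ⟨a0, ha0⟩ := ha
  obtain ⟨b, hb⟩ := hb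
  have ha0t : dt a0 t < dt a0 s := ha0 t ht (Ne.symm hst)
  have hbs : dt b s < dt b t := hb s hs hst
  have ha0ne : a0 ≠ 0 := by
    intro hc; rw [hc] at ha0t; simp [dt] at ha0t
  have hbne : b ≠ 0 := by
    intro hc; rw [hc] at hbs; simp [dt] at hbs
  -- choose h with cr h b ≠ 0 and cr a0 h ≠ 0
  obtain ⟨h, hhb, hah⟩ : ∃ h : Pt, cr h b ≠ 0 ∧ cr a0 h ≠ 0 := by
    by_cases hc : cr a0 (rot b) = 0
    · refine ⟨rot b + b, ?_, ?_⟩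
      · have h1 : cr (rot b) b = - dt b b := cr_rot_left b b
        have h2 : cr (rot b + b) b = cr (rot b) b + cr b b := by
          simp [cr, Prod.fst_add, Prod.snd_add]; try ring
        rw [h2, h1, cr_self, add_zero]
        have hp := dt_self_pos hbne
        intro hcc
        linarith [neg_eq_zero.mp hcc]
      · -- a0 is parallel to rot b hence cr a0 b ≠ 0
        have hrbne : rot b ≠ 0 := rot_ne_zero hbne
        have hdec : a0 = (dt a0 (rot b) / dt (rot b) (rot b)) • rot b := decomp hc hrbne
        have hμ : dt a0 (rot b) / dt (rot b) (rot b) ≠ 0 := by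
          intro hcc
          apply ha0ne
          rw [hdec, hcc, zero_smul]
        have hcr2 : cr a0 (rot b + b) = cr a0 b := by
          have h3 : cr a0 (rot b + b) = cr a0 (rot b) + cr a0 b := by
            simp [cr, Prod.fst_add, Prod.snd_add]; try ring
          rw [h3, hc, zero_add]
        rw [hcr2, hdec, cr_smul_left]
        have hcrrb : cr (rot b) b = - dt b b := cr_rot_left b b
        rw [hcrrb]
        have := dt_self_pos hbne
        intro hcc
        rcases mul_eq_zero.mp hcc with h' | h'
        · exact hμ h'
        · linarith
    · refine ⟨rot b, ?_, hc⟩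
      rw [cr_rot_left]
      have := dt_self_pos hbne
      intro hcc
      linarith [neg_eq_zero.mp hcc]
  -- the one-parameter family
  set aE : ℝ → Pt := fun e => a0 + e • h with haE
  set Δ : ℝ → ℝ := fun e => cr (aE e) b with hΔ
  have hΔlin : ∀ e, Δ e = cr a0 b + e * cr h b := by
    intro e
    rw [hΔ, haE]
    exact cr_add_smul_left a0 h b e
  set oF : ℝ → Pt := fun e =>
    ((dt (aE e) s * b.2 - dt b t * (aE e).2) / Δ e,
     ((aE e).1 * dt b t - b.1 * dt (aE e) s) / Δ e) with hoF
  have ospec : ∀ e, Δ e ≠ 0 → dt (aE e) (oF e) = dt (aE e) s ∧ dt b (oF e) = dt b t := by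
    intro e he
    have hne : (aE e).1 * b.2 - (aE e).2 * b.1 ≠ 0 := by
      intro hcc
      apply he
      rw [hΔ]
      simpa [cr] using hcc
    constructor
    · simp only [hoF, dt, hΔ, cr]
      field_simp
      ring
    · simp only [hoF, dt, hΔ, cr]
      have hne' : -(b.1 * (aE e).2) + (aE e).1 * b.2 ≠ 0 := by
        intro hcc; apply hne; linarith
      rw [mul_div_assoc', mul_div_assoc', ← add_div, div_eq_iff hne]
      ring
  -- bad parameter values
  set bad0 : Set ℝ := {e | Δ e = 0} with hbad0
  set badP : Pt → Pt → Set ℝ := fun p q =>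
    {e | Δ e ≠ 0 ∧ cr (p - oF e) (q - oF e) = 0} with hbadP
  have hbad0fin : bad0.Finite := by
    apply Set.Subsingleton.finite
    intro e1 h1 e2 h2
    simp only [hbad0, Set.mem_setOf_eq] at h1 h2
    rw [hΔlin] at h1 h2
    have : (e1 - e2) * cr h b = 0 := by linarith
    rcases mul_eq_zero.mp this with h' | h'
    · linarith
    · exact absurd h' hhb
  have hbadPfin : ∀ p ∈ S, ∀ q ∈ S, p ≠ q → (badP p q).Finite := by
    intro p hp q hq hpq
    apply Set.Subsingleton.finite
    intro e1 h1 e2 h2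
    simp only [hbadP, Set.mem_setOf_eq] at h1 h2
    obtain ⟨hΔ1, hcr1⟩ := h1
    obtain ⟨hΔ2, hcr2⟩ := h2
    by_contra hne
    obtain ⟨hsp1, htp1⟩ := ospec e1 hΔ1
    obtain ⟨hsp2, htp2⟩ := ospec e2 hΔ2
    by_cases heq : oF e1 = oF e2
    · -- same pivot for distinct parameters forces o = s
      have e1eq : dt a0 (oF e1) + e1 * dt h (oF e1) = dt a0 s + e1 * dt h s := by
        have := hsp1
        rw [haE] at this
        simpa [dt_add_smul_left] using this
      have e2eq : dt a0 (oF e1) + e2 * dt h (oF e1) = dt a0 s + e2 * dt h s := by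
        have := hsp2
        rw [haE, ← heq] at this
        simpa [dt_add_smul_left, heq] using this
      have hhz : dt h (oF e1 - s) = 0 := by
        rw [dt_sub_right]
        have : (e1 - e2) * (dt h (oF e1) - dt h s) = 0 := by linarith
        rcases mul_eq_zero.mp this with h' | h'
        · exact absurd (by linarith) hne
        · linarith
      have haz : dt a0 (oF e1 - s) = 0 := by
        have hthis : dt h (oF e1) - dt h s = 0 := by
          have := hhz
          rw [dt_sub_right] at this
          linarith
        rw [dt_sub_right]
        linear_combination e1eq - e1 * hthis
      have : oF e1 - s = 0 := indep_zero hah haz hhz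
      have hos : oF e1 = s := by
        rwa [sub_eq_zero] at this
      rw [hos] at htp1
      linarith
    · -- two distinct pivots on the line through p and q
      have hvne : q - p ≠ (0 : Pt) := sub_ne_zero.mpr (Ne.symm hpq)
      have hpar1 : cr (p - oF e1) (q - p) = 0 := by
        have : cr (p - oF e1) (q - p) = cr (p - oF e1) (q - oF e1) - cr (p - oF e1) (p - oF e1) := by
          rw [← cr_sub_right]
          congr 1
          abel
        rw [this, hcr1, cr_self, sub_zero]
      have hpar2 : cr (p - oF e2) (q - p) = 0 := by
        have : cr (p - oF e2) (q - p) = cr (p - oF e2) (q - oF e2) - cr (p - oF e2) (p - oF e2) := by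
          rw [← cr_sub_right]
          congr 1
          abel
        rw [this, hcr2, cr_self, sub_zero]
      set μ1 : ℝ := dt (p - oF e1) (q - p) / dt (q - p) (q - p) with hμ1
      set μ2 : ℝ := dt (p - oF e2) (q - p) / dt (q - p) (q - p) with hμ2
      have hd1 : p - oF e1 = μ1 • (q - p) := decomp hpar1 hvne
      have hd2 : p - oF e2 = μ2 • (q - p) := decomp hpar2 hvne
      have hdiff : oF e2 - oF e1 = (μ1 - μ2) • (q - p) := by
        have : (p - oF e1) - (p - oF e2) = (μ1 - μ2) • (q - p) := by
          rw [hd1, hd2, sub_smul]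
        rw [← this]
        abel
      have hdtb : dt b (oF e2 - oF e1) = 0 := by
        rw [dt_sub_right, htp1, htp2, sub_self]
      have hdtbv : dt b (q - p) = 0 := by
        rw [hdiff] at hdtb
        have hsm : dt b ((μ1 - μ2) • (q - p)) = (μ1 - μ2) * dt b (q - p) := by
          simp [dt, Prod.smul_fst, Prod.smul_snd, smul_eq_mul]; try ring
        rw [hsm] at hdtb
        rcases mul_eq_zero.mp hdtb with h' | h'
        · exfalso
          apply heq
          have : oF e2 - oF e1 = 0 := by
            rw [hdiff, show μ1 - μ2 = 0 by linarith, zero_smul]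
          have := sub_eq_zero.mp this
          exact this.symm
        · exact h'
      have hdtbp : dt b (p - oF e1) = 0 := by
        rw [hd1]
        have hsm : dt b (μ1 • (q - p)) = μ1 * dt b (q - p) := by
          simp [dt, Prod.smul_fst, Prod.smul_snd, smul_eq_mul]; try ring
        rw [hsm, hdtbv, mul_zero]
      have hbp : dt b p = dt b t := by
        rw [dt_sub_right] at hdtbp
        linarith [htp1]
      have hbq : dt b q = dt b t := by
        rw [dt_sub_right] at hdtbv
        linarith [hbp]
      have hpt : p = t := by
        by_contra hptne
        have := hb p hp hptne
        linarith
      have hqt : q = t := by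
        by_contra hqtne
        have := hb q hq hqtne
        linarith
      exact hpq (hpt.trans hqt.symm)
  -- total bad set
  set bigBad : Set ℝ := bad0 ∪ ⋃ p ∈ (S : Set Pt), ⋃ q ∈ (S : Set Pt),
    if p ≠ q then badP p q else ∅ with hbigBad
  have hbigBadFin : bigBad.Finite := by
    apply Set.Finite.union hbad0fin
    apply Set.Finite.biUnion S.finite_toSet
    intro p hp
    apply Set.Finite.biUnion S.finite_toSet
    intro q hq
    split_ifs with hpq
    · exact hbadPfin p hp q hq hpq
    · exact Set.finite_empty
  -- pick ε
  obtain ⟨ε, hεpos, hεbad, hεineq⟩ := pick_eps (S.erase s)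
    (fun x => dt a0 x - dt a0 s) (fun x => dt h x - dt h s)
    (by
      intro x hx
      obtain ⟨hxs, hxS⟩ := Finset.mem_erase.mp hx
      show dt a0 x - dt a0 s < 0
      linarith [ha0 x hxS hxs])
    bigBad hbigBadFin
  set a : Pt := aE ε with haeps
  have hΔε : Δ ε ≠ 0 := by
    intro hc
    exact hεbad (Or.inl hc)
  set o : Pt := oF ε with hodef
  obtain ⟨hoa, hob⟩ := ospec ε hΔε
  rw [← haeps, ← hodef] at hoa
  rw [← hodef] at hob
  have hstricta : ∀ x ∈ S, x ≠ s → dt a x < dt a s := by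
    intro x hx hxs
    have := hεineq x (Finset.mem_erase.mpr ⟨hxs, hx⟩)
    rw [haeps, haE]
    rw [dt_add_smul_left, dt_add_smul_left]
    linarith
  have hG1 : ∀ p ∈ S, ∀ q ∈ S, p ≠ q → cr (p - o) (q - o) ≠ 0 := by
    intro p hp q hq hpq hc
    apply hεbad
    right
    rw [Set.mem_iUnion₂]
    refine ⟨p, hp, ?_⟩
    rw [Set.mem_iUnion₂]
    refine ⟨q, hq, ?_⟩
    rw [if_pos hpq]
    exact ⟨hΔε, hc⟩
  -- supporting-sign analysis
  have hane : a ≠ 0 := by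
    intro hc
    have := hstricta t ht (Ne.symm hst)
    rw [hc] at this
    simp [dt] at this
  have hrane : rot a ≠ 0 := rot_ne_zero hane
  have hsperp : cr (s - o) (rot a) = 0 := by
    rw [cr_rot_right, dt_comm, dt_sub_right]
    linarith
  set μ : ℝ := dt (s - o) (rot a) / dt (rot a) (rot a) with hμdef
  have hsdec : s - o = μ • rot a := decomp hsperp hrane
  have hμne : μ ≠ 0 := by
    intro hc
    have : s - o = 0 := by rw [hsdec, hc, zero_smul]
    have hseq : s = o := by rwa [sub_eq_zero] at this
    rw [← hseq] at hob
    linarith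
  have hsform : ∀ x : Pt, cr (s - o) (x - o) = μ * (dt a s - dt a x) := by
    intro x
    rw [hsdec, cr_smul_left, cr_rot_left, dt_sub_right]
    have : dt a o = dt a s := hoa
    linear_combination μ * this
  have hbperp : cr (t - o) (rot b) = 0 := by
    rw [cr_rot_right, dt_comm, dt_sub_right]
    linarith
  have hrbne : rot b ≠ 0 := rot_ne_zero hbne
  set ν : ℝ := dt (t - o) (rot b) / dt (rot b) (rot b) with hνdef
  have htdec : t - o = ν • rot b := decomp hbperp hrbne
  have hνne : ν ≠ 0 := by
    intro hc
    have : t - o = 0 := by rw [htdec, hc, zero_smul]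
    have hteq : t = o := by rwa [sub_eq_zero] at this
    rw [← hteq] at hoa
    have := hstricta t ht (Ne.symm hst)
    linarith
  have htform : ∀ x : Pt, cr (t - o) (x - o) = ν * (dt b t - dt b x) := by
    intro x
    rw [htdec, cr_smul_left, cr_rot_left, dt_sub_right]
    have : dt b o = dt b t := hob
    linear_combination ν * this
  have hP1 : 0 < dt a s - dt a t := by
    have := hstricta t ht (Ne.symm hst)
    linarith
  have hP2 : 0 < dt b t - dt b s := by linarith
  have hlink : μ * (dt a s - dt a t) = - (ν * (dt b t - dt b s)) := by
    have h1 := hsform t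
    have h2 := htform s
    have h3 := cr_swap (s - o) (t - o)
    rw [h1] at h3
    rw [h2] at h3
    linarith
  refine ⟨o, hG1, ?_⟩
  rcases lt_trichotomy μ 0 with hμneg | hμ0 | hμpos
  · right
    have hνpos : 0 < ν := by nlinarith
    constructor
    · intro x hx hxt
      rw [htform]
      have := hb x hx hxt
      nlinarith
    · intro x hx hxs
      rw [hsform]
      have := hstricta x hx hxs
      nlinarith
  · exact absurd hμ0 hμne
  · left
    have hνneg : ν < 0 := by nlinarith
    constructor
    · intro x hx hxs
      rw [hsform]
      have := hstricta x hx hxs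
      nlinarith
    · intro x hx hxt
      rw [htform]
      have := hb x hx hxt
      nlinarith

/-! ### strict supporting functional at an outer point -/

lemma dt_eq_of_clm (f : (ℝ × ℝ) →L[ℝ] ℝ) (z : Pt) :
    f z = dt (f (1, 0), f (0, 1)) z := by
  have hz : z = z.1 • ((1 : ℝ), (0 : ℝ)) + z.2 • ((0 : ℝ), (1 : ℝ)) := by
    refine Prod.ext_iff.mpr ⟨by simp, by simp⟩
  conv_lhs => rw [hz]
  rw [map_add, map_smul, map_smul]
  simp [dt, smul_eq_mul, mul_comm]

lemma exists_strict_sep (S : Finset Pt) (hS : GenPos S) (p : Pt) (hout : outerPt S p)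
    (h3 : 3 ≤ S.card) : ∃ a : Pt, ∀ x ∈ S, x ≠ p → dt a x < dt a p := by
  classical
  obtain ⟨hpS, hfr⟩ := hout
  -- three distinct points give full affine span
  obtain ⟨q, hq⟩ : (S.erase p).Nonempty := by
    rw [← Finset.card_pos, Finset.card_erase_of_mem hpS]
    omega
  obtain ⟨r, hr⟩ : ((S.erase p).erase q).Nonempty := by
    rw [← Finset.card_pos, Finset.card_erase_of_mem hq, Finset.card_erase_of_mem hpS]
    omega
  have hqS : q ∈ S := Finset.mem_of_mem_erase hq
  have hrS : r ∈ S := Finset.mem_of_mem_erase (Finset.mem_of_mem_erase hr)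
  have hqp : q ≠ p := Finset.ne_of_mem_erase hq
  have hrq : r ≠ q := Finset.ne_of_mem_erase hr
  have hrp : r ≠ p := Finset.ne_of_mem_erase (Finset.mem_of_mem_erase hr)
  have hncol : ¬ Collinear ℝ ({p, q, r} : Set Pt) :=
    hS p hpS q hqS r hrS (Ne.symm hqp) (Ne.symm hrq) (Ne.symm hrp)
  have hai : AffineIndependent ℝ ![p, q, r] :=
    affineIndependent_iff_not_collinear_set.mpr hncol
  have hfinrank : Module.finrank ℝ (ℝ × ℝ) = 2 := by
    simp [Module.finrank_prod]
  have hspan3 : affineSpan ℝ (Set.range ![p, q, r]) = ⊤ := by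
    rw [hai.affineSpan_eq_top_iff_card_eq_finrank_add_one]
    simp [hfinrank]
  have hsubset : Set.range ![p, q, r] ⊆ (S : Set Pt) := by
    rintro x ⟨i, rfl⟩
    fin_cases i <;> simp [hpS, hqS, hrS]
  have hspan : affineSpan ℝ (S : Set Pt) = ⊤ := by
    apply top_unique
    rw [← hspan3]
    exact affineSpan_mono ℝ hsubset
  have hint : (interior (convexHull ℝ (S : Set Pt))).Nonempty :=
    interior_convexHull_nonempty_iff_affineSpan_eq_top.mpr hspan
  set C : Set Pt := convexHull ℝ (S : Set Pt) with hC
  have hCconv : Convex ℝ C := convex_convexHull ℝ _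
  have hpint : p ∉ interior C := by
    rw [frontier] at hfr
    exact hfr.2
  obtain ⟨f, hf⟩ := geometric_hahn_banach_open_point (hCconv.interior) isOpen_interior hpint
  -- weak inequality on all of C
  have hweak : ∀ x ∈ C, f x ≤ f p := by
    intro x hx
    by_contra hgt
    push_neg at hgt
    obtain ⟨y₀, hy₀⟩ := hint
    have hy₀p : f y₀ < f p := hf y₀ hy₀
    set θ : ℝ := (f x - f p) / (2 * (f x - f y₀)) with hθ
    have hxy : 0 < f x - f y₀ := by linarith
    have hθpos : 0 < θ := by
      apply div_pos (by linarith) (by linarith)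
    have hθlt : θ < 1 := by
      rw [hθ, div_lt_one (by linarith)]
      linarith
    have hz : θ • y₀ + (1 - θ) • x ∈ interior C := by
      apply hCconv.combo_interior_closure_subset_interior (a := θ) (b := 1 - θ)
        hθpos (by linarith) (by ring)
      exact Set.add_mem_add (Set.smul_mem_smul_set hy₀)
        (Set.smul_mem_smul_set (subset_closure hx))
    have hzlt := hf _ hz
    rw [map_add, map_smul, map_smul, smul_eq_mul, smul_eq_mul] at hzlt
    have hθeq : θ * (f x - f y₀) = (f x - f p) / 2 := by
      rw [hθ]
      field_simp
    nlinarith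
  set a0 : Pt := (f (1, 0), f (0, 1)) with ha0
  have hf_dt : ∀ z : Pt, f z = dt a0 z := fun z => dt_eq_of_clm f z
  have ha0ne : a0 ≠ 0 := by
    obtain ⟨y₀, hy₀⟩ := hint
    intro hc
    have h1 := hf y₀ hy₀
    rw [hf_dt, hf_dt, hc] at h1
    simp [dt] at h1
  have hweakS : ∀ x ∈ S, dt a0 x ≤ dt a0 p := by
    intro x hx
    rw [← hf_dt, ← hf_dt]
    exact hweak x (subset_convexHull ℝ _ hx)
  by_cases hu : ∃ u ∈ S, u ≠ p ∧ dt a0 u = dt a0 p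
  · obtain ⟨u, huS, hup, hueq⟩ := hu
    -- all other points are strict
    have hstrict' : ∀ x ∈ S, x ≠ p → x ≠ u → dt a0 x < dt a0 p := by
      intro x hx hxp hxu
      rcases (hweakS x hx).lt_or_eq with h' | h'
      · exact h'
      · exfalso
        -- p, u, x would be collinear
        apply hS p hpS u huS x hx (Ne.symm hup) (Ne.symm hxu) (Ne.symm hxp)
        rw [collinear_iff_of_mem (Set.mem_insert p _)]
        refine ⟨rot a0, ?_⟩
        intro z hz
        have key : ∀ y : Pt, dt a0 y = dt a0 p → ∃ c : ℝ, y = c • rot a0 +ᵥ p := by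
          intro y hy
          have hperp : cr (y - p) (rot a0) = 0 := by
            rw [cr_rot_right, dt_comm, dt_sub_right]
            linarith
          refine ⟨dt (y - p) (rot a0) / dt (rot a0) (rot a0), ?_⟩
          have hdec := decomp hperp (rot_ne_zero ha0ne)
          rw [vadd_eq_add, ← hdec]
          abel
        simp only [Set.mem_insert_iff, Set.mem_singleton_iff] at hz
        rcases hz with rfl | rfl | rfl
        · exact ⟨0, by simp⟩
        · exact key _ hueq
        · exact key _ h'
    -- perturb in direction p - u
    set g : Pt := p - u with hg
    obtain ⟨ε, hεpos, _, hεineq⟩ := pick_eps ((S.erase p).erase u)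
      (fun x => dt a0 x - dt a0 p) (fun x => dt g x - dt g p)
      (by
        intro x hx
        have hxu := Finset.ne_of_mem_erase hx
        have hx' := Finset.mem_of_mem_erase hx
        have hxp := Finset.ne_of_mem_erase hx'
        have hxS := Finset.mem_of_mem_erase hx'
        show dt a0 x - dt a0 p < 0
        linarith [hstrict' x hxS hxp hxu])
      ∅ Set.finite_empty
    refine ⟨a0 + ε • g, ?_⟩
    intro x hx hxp
    rw [dt_add_smul_left, dt_add_smul_left]
    by_cases hxu : x = u
    · subst hxu
      have hgu : dt g x - dt g p = - dt g g := by
        simp only [hg, dt, Prod.fst_sub, Prod.snd_sub]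
        ring
      have hgg : 0 < dt g g := dt_self_pos (by
        rw [hg, sub_ne_zero]
        exact Ne.symm hup)
      nlinarith [hueq]
    · have := hεineq x (Finset.mem_erase.mpr ⟨hxu, Finset.mem_erase.mpr ⟨hxp, hx⟩⟩)
      linarith
  · push_neg at hu
    refine ⟨a0, ?_⟩
    intro x hx hxp
    rcases (hweakS x hx).lt_or_eq with h' | h'
    · exact h'
    · exact absurd h' (hu x hx hxp)

/-! ### assembling the theorem -/

end Stmt10Aux

/-- for any two distinct outer points `s, t` of `S`, there is a plane
spanning `st`-path that is strongly suffix-independent. -/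
theorem stmt10 (S : Finset Pt) (hS : GenPos S) (s t : Pt) (hst : s ≠ t)
    (hs : outerPt S s) (ht : outerPt S t) :
    ∃ l : List Pt, PlanePath S l ∧ l.head? = some s ∧ l.getLast? = some t ∧
      SuffixIndep l ∧ SuffixIndep l.reverse := by
  classical
  have hsS := hs.1
  have htS := ht.1
  have hfun : (∃ a : Pt, ∀ x ∈ S, x ≠ s → dt a x < dt a s) ∧
      (∃ b : Pt, ∀ x ∈ S, x ≠ t → dt b x < dt b t) := by
    by_cases h3 : 3 ≤ S.card
    · exact ⟨exists_strict_sep S hS s hs h3, exists_strict_sep S hS t ht h3⟩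
    · have hsub : ({s, t} : Finset Pt) ⊆ S := by
        intro x hx
        simp only [Finset.mem_insert, Finset.mem_singleton] at hx
        rcases hx with h | h
        · rw [h]; exact hsS
        · rw [h]; exact htS
      have hstc : ({s, t} : Finset Pt).card = 2 := by
        rw [Finset.card_insert_of_notMem (by simpa using hst), Finset.card_singleton]
      have hSeq : S = {s, t} := by
        apply (Finset.eq_of_subset_of_card_le hsub ?_).symm
        omega
      constructor
      · refine ⟨s - t, ?_⟩
        intro x hx hxs
        rw [hSeq] at hx
        simp only [Finset.mem_insert, Finset.mem_singleton] at hx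
        rcases hx with h | h
        · exact absurd h hxs
        · rw [h]
          have hpos : 0 < dt (s - t) (s - t) := dt_self_pos (sub_ne_zero.mpr hst)
          rw [dt_sub_right] at hpos
          linarith
      · refine ⟨t - s, ?_⟩
        intro x hx hxt
        rw [hSeq] at hx
        simp only [Finset.mem_insert, Finset.mem_singleton] at hx
        rcases hx with h | h
        · rw [h]
          have hpos : 0 < dt (t - s) (t - s) := dt_self_pos (sub_ne_zero.mpr (Ne.symm hst))
          rw [dt_sub_right] at hpos
          linarith
        · exact absurd h hxt
  obtain ⟨ha, hb⟩ := hfun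
  obtain ⟨o, hG1, hdisj⟩ := exists_pivot S s t hsS htS hst ha hb
  rcases hdisj with ⟨h1, h2⟩ | ⟨h1, h2⟩
  · obtain ⟨l, hpl, _, hhead, hlast, hsi1, hsi2⟩ := main_construct S s t o hsS htS hst hG1 h1 h2
    exact ⟨l, hpl, hhead, hlast, hsi1, hsi2⟩
  · obtain ⟨l, _, hplr, hhead, hlast, hsi1, hsi2⟩ :=
      main_construct S t s o htS hsS (Ne.symm hst) hG1 h1 h2
    refine ⟨l.reverse, hplr, ?_, ?_, hsi2, ?_⟩
    · rw [List.head?_reverse]; exact hlast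
    · rw [List.getLast?_reverse]; exact hhead
    · rw [List.reverse_reverse]; exact hsi1
end
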